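/- arXiv:1907.04220 — 7 statements merged into one kernel-verified Lean document; each statement's English description precedes it below -/
import Mathlib

section
/- Let μ > 0, σ > 0, and let p ≥ μ be any price. Then the worst-case ratio of optimal revenue to the revenue of posting price p over (μ,σ)-distributed valuations is unbounded: for every M > 0 there exists F ∈ 𝔽_{μ,σ} such that OPT(F) > M·REV(p;F). -/
open MeasureTheory

/-- Revenue of posting price `p` against valuation distribution `F`:
`REV(p;F) = p · P(X ≥ p)`. -/
noncomputable def rev (F : Measure ℝ) (p : ℝ) : ℝ :=
  p * (F (Set.Ici p)).toReal

/-- Optimal revenue `OPT(F) = sup_{p ≥ 0} p · P(X ≥ p)`. -/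
noncomputable def opt (F : Measure ℝ) : ℝ :=
  ⨆ p ∈ Set.Ici (0 : ℝ), rev F p

/-- Revenue of a randomized pricing mechanism `A` (a measure over prices):
`REV(A;F) = E_{p∼A}[REV(p;F)]`. -/
noncomputable def mrev (A F : Measure ℝ) : ℝ :=
  ∫ p, rev F p ∂A

/-- `F` is a `(μ,σ)`-distributed distribution: a probability measure on `[0,∞)`
with mean `m` and variance at most `s²`. -/
structure MeanVarLe (F : Measure ℝ) (m s : ℝ) : Prop where
  prob : IsProbabilityMeasure F
  supp : F (Set.Iio 0) = 0
  int_mean : Integrable (fun x => x) F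
  int_sq : Integrable (fun x => x ^ 2) F
  mean : ∫ x, x ∂F = m
  var_le : ∫ x, (x - m) ^ 2 ∂F ≤ s ^ 2

/-- A randomized pricing mechanism: a probability measure over prices in `[0,∞)`. -/
def IsPriceMech (A : Measure ℝ) : Prop :=
  IsProbabilityMeasure A ∧ A (Set.Iio 0) = 0

/-- Markov's inequality bounds every posted-price revenue by the mean. -/
lemma MeanVarLe.rev_le_mean {F : Measure ℝ} {m s : ℝ} (hF : MeanVarLe F m s) (q : ℝ) :
    rev F q ≤ m := by
  have hnonneg : 0 ≤ᵐ[F] fun x : ℝ => x := by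
    filter_upwards [measure_eq_zero_iff_ae_notMem.mp hF.supp] with x hx
    simpa using hx
  rw [← hF.mean]
  exact mul_meas_ge_le_integral_of_nonneg hnonneg hF.int_mean q

lemma MeanVarLe.rev_le_opt {F : Measure ℝ} {m s q : ℝ} (hF : MeanVarLe F m s) (hq : 0 ≤ q) :
    rev F q ≤ opt F := by
  have hbdd : BddAbove (Set.range fun r : ℝ => ⨆ _ : r ∈ Set.Ici (0 : ℝ), rev F r) := by
    refine ⟨max m 0, ?_⟩
    rintro _ ⟨r, rfl⟩
    exact Real.iSup_le (fun _ => (hF.rev_le_mean r).trans (le_max_left _ _)) (le_max_right _ _)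
  calc rev F q = ⨆ _ : q ∈ Set.Ici (0 : ℝ), rev F q :=
        (ciSup_pos (f := fun _ => rev F q) hq).symm
    _ ≤ opt F := le_ciSup hbdd q

/-- The distribution on `{a, b}` with mean `m`. -/
noncomputable def twoPoint (a b m : ℝ) : Measure ℝ :=
  ENNReal.ofReal ((b - m) / (b - a)) • Measure.dirac a +
    ENNReal.ofReal ((m - a) / (b - a)) • Measure.dirac b

section TwoPoint

variable {a b m : ℝ}

lemma integrable_twoPoint (f : ℝ → ℝ) : Integrable f (twoPoint a b m) :=
  .add_measure (.smul_measure (integrable_dirac enorm_lt_top) ENNReal.ofReal_ne_top)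
    (.smul_measure (integrable_dirac enorm_lt_top) ENNReal.ofReal_ne_top)

lemma integral_twoPoint (hab : a < b) (ham : a ≤ m) (hmb : m ≤ b) (f : ℝ → ℝ) :
    ∫ x, f x ∂twoPoint a b m = (b - m) / (b - a) * f a + (m - a) / (b - a) * f b := by
  have hba : 0 < b - a := sub_pos.mpr hab
  rw [twoPoint, integral_add_measure
      (.smul_measure (integrable_dirac enorm_lt_top) ENNReal.ofReal_ne_top)
      (.smul_measure (integrable_dirac enorm_lt_top) ENNReal.ofReal_ne_top),
    integral_smul_measure, integral_smul_measure, integral_dirac, integral_dirac,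
    ENNReal.toReal_ofReal (by bound), ENNReal.toReal_ofReal (by bound), smul_eq_mul, smul_eq_mul]

lemma twoPoint_Ici {q : ℝ} (haq : a < q) (hqb : q ≤ b) :
    twoPoint a b m (Set.Ici q) = ENNReal.ofReal ((m - a) / (b - a)) := by
  simp [twoPoint, Set.indicator, not_le.mpr haq, hqb]

lemma rev_twoPoint (hab : a < b) {q : ℝ} (haq : a < q) (hqb : q ≤ b) (ham : a ≤ m) :
    rev (twoPoint a b m) q = q * ((m - a) / (b - a)) := by
  rw [rev, twoPoint_Ici haq hqb, ENNReal.toReal_ofReal]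
  exact div_nonneg (sub_nonneg.mpr ham) (sub_pos.mpr hab).le

/-- A two-point law on `{a, b}` with mean `m` has variance `(m - a) (b - m)`. -/
lemma meanVarLe_twoPoint {s : ℝ} (ha : 0 ≤ a) (hab : a < b) (ham : a ≤ m) (hmb : m ≤ b)
    (hvar : (m - a) * (b - m) ≤ s ^ 2) : MeanVarLe (twoPoint a b m) m s := by
  have hba : b - a ≠ 0 := (sub_pos.mpr hab).ne'
  refine ⟨⟨?_⟩, ?_, integrable_twoPoint _, integrable_twoPoint _, ?_, ?_⟩
  · have hsum : (b - m) / (b - a) + (m - a) / (b - a) = 1 := by field_simp; ring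
    simp only [twoPoint, Measure.add_apply, Measure.smul_apply, measure_univ, smul_eq_mul,
      mul_one]
    rw [← ENNReal.ofReal_add (by bound) (by bound), hsum, ENNReal.ofReal_one]
  · simp [twoPoint, Set.indicator, ha, ha.trans hab.le]
  · rw [integral_twoPoint hab ham hmb]
    field_simp
    ring
  · rw [integral_twoPoint hab ham hmb]
    convert hvar using 1
    field_simp
    ring

end TwoPoint

/-- For `μ, σ > 0` and any price `p ≥ μ`, the worst-case ratio of optimal
revenue to the revenue of posting `p` over `(μ,σ)`-distributed valuations is unbounded:
for every `M > 0` there is `F ∈ 𝔽_{μ,σ}` with `OPT(F) > M·REV(p;F)`. -/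
theorem stmt1 (μ σ p : ℝ) (hμ : 0 < μ) (hσ : 0 < σ) (hp : μ ≤ p) :
    ∀ M : ℝ, 0 < M → ∃ F : Measure ℝ, MeanVarLe F μ σ ∧ M * rev F p < opt F := by
  intro M _
  -- A small atom just below `μ` and a rare high value `t`: posting `t` earns `t / p` times
  -- as much as posting `p`, while the variance `δ (t - μ)` is kept below `σ²` by `δ`.
  set t := max (M * p) p + 1
  set δ := min (μ / 2) (σ ^ 2 / (t - μ))
  have htμ : 0 < t - μ := by grind
  have hδ : 0 < δ := lt_min (by positivity) (by positivity)
  have hδμ : δ ≤ μ / 2 := min_le_left _ _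
  have hvar : δ * (t - μ) ≤ σ ^ 2 := (le_div_iff₀ htμ).mp (min_le_right _ _)
  have hat : μ - δ < t := by linarith
  have hF := meanVarLe_twoPoint (m := μ) (s := σ) (by linarith) hat (by linarith) (by linarith)
    (by simpa using hvar)
  refine ⟨_, hF, ?_⟩
  set w := (μ - (μ - δ)) / (t - (μ - δ))
  have hw : 0 < w := div_pos (by linarith) (by linarith)
  calc M * rev (twoPoint (μ - δ) t μ) p
      = M * p * w := by rw [rev_twoPoint hat (by linarith) (by grind) (by linarith)]; ring
    _ < t * w := by gcongr; grind
    _ = rev (twoPoint (μ - δ) t μ) t := (rev_twoPoint hat hat le_rfl (by linarith)).symm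
    _ ≤ opt _ := hF.rev_le_opt (by grind)
end

section
/- Let μ > 0, σ ≥ 0 and let 0 < p < μ. Then for every (μ,σ)-distributed distribution F (i.e., every nonnegative random variable X with E[X] = μ and Var(X) ≤ σ²), the optimal revenue satisfies OPT(F) ≤ max{ 1 + σ²/(μ−p)², μ/p + σ²/(p(μ−p)) } · p·P(X ≥ p). -/
open MeasureTheory

/-!
Write `r = P(X ≥ p)` and `s = E[X - μ; X ≥ p]`. As `X - μ` is centred,
`s = -E[X - μ; X < p] ≥ (μ - p)(1 - r)`, and Cauchy–Schwarz on either side of `p` gives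
`s² ≤ σ² r (1 - r)`. Together these yield `s (μ - p) ≤ σ² r` and Cantelli's bound
`(μ - p)² ≤ r ((μ - p)² + σ²)`. A price `q ≤ p` earns at most `p`, which Cantelli bounds by the
first term of the maximum times `p r`; a price `q > p` earns at most
`E[X; X ≥ q] ≤ E[X; X ≥ p] = μ r + s`, which is at most the second term times `p r`.
-/

open Set

lemma sq_integral_le_integral_sq_mul_measureReal_univ {α : Type*} [MeasurableSpace α]
    (ν : Measure α) [IsFiniteMeasure ν] {g : α → ℝ} (hg : Integrable g ν)
    (hg2 : Integrable (fun x => g x ^ 2) ν) :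
    (∫ x, g x ∂ν) ^ 2 ≤ (∫ x, g x ^ 2 ∂ν) * ν.real univ := by
  set m := ν.real univ
  set I := ∫ x, g x ∂ν
  rcases (measureReal_nonneg (μ := ν) (s := univ)).eq_or_lt with hm | hm
  · have : ν = 0 := Measure.measure_univ_eq_zero.mp ((measureReal_eq_zero_iff).mp hm.symm)
    simp [I, this]
  · have h1 : Integrable (fun x => m ^ 2 * g x ^ 2) ν := hg2.const_mul _
    have h2 : Integrable (fun x => 2 * m * I * g x) ν := hg.const_mul _
    have hexpand : ∫ x, (m * g x - I) ^ 2 ∂ν = m * (m * ∫ x, g x ^ 2 ∂ν - I ^ 2) := by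
      simp_rw [show ∀ x, (m * g x - I) ^ 2 = m ^ 2 * g x ^ 2 - 2 * m * I * g x + I ^ 2 from
        fun x => by ring]
      have h12 : Integrable (fun x => m ^ 2 * g x ^ 2 - 2 * m * I * g x) ν := h1.sub h2
      rw [integral_add h12 (integrable_const _), integral_sub h1 h2, integral_const,
        integral_const_mul, integral_const_mul, smul_eq_mul]
      ring
    have hnonneg : 0 ≤ ∫ x, (m * g x - I) ^ 2 ∂ν := integral_nonneg fun x => sq_nonneg _
    rw [hexpand] at hnonneg
    nlinarith [(mul_nonneg_iff_of_pos_left hm).mp hnonneg]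

lemma sq_setIntegral_le_of_integral_eq_zero {α : Type*} [MeasurableSpace α]
    (ν : Measure α) [IsProbabilityMeasure ν] {g : α → ℝ} (hg : Integrable g ν)
    (hg2 : Integrable (fun x => g x ^ 2) ν) (h0 : ∫ x, g x ∂ν = 0) {S : Set α}
    (hS : MeasurableSet S) :
    (∫ x in S, g x ∂ν) ^ 2 ≤ (∫ x, g x ^ 2 ∂ν) * ν.real S * ν.real Sᶜ := by
  have hcompl : ∫ x in Sᶜ, g x ∂ν = -∫ x in S, g x ∂ν := by
    linarith [integral_add_compl hS hg]
  have hS_cs := sq_integral_le_integral_sq_mul_measureReal_univ (ν.restrict S)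
    hg.restrict hg2.restrict
  have hSc_cs := sq_integral_le_integral_sq_mul_measureReal_univ (ν.restrict Sᶜ)
    hg.restrict hg2.restrict
  rw [measureReal_restrict_apply_univ] at hS_cs hSc_cs
  rw [hcompl, neg_sq] at hSc_cs
  have hsum : (∫ x in S, g x ∂ν) ^ 2 = (∫ x in S, g x ∂ν) ^ 2 * (ν.real S + ν.real Sᶜ) := by
    rw [probReal_add_probReal_compl hS, mul_one]
  rw [hsum, ← integral_add_compl hS hg2]
  nlinarith [mul_le_mul_of_nonneg_right hS_cs (measureReal_nonneg (μ := ν) (s := Sᶜ)),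
    mul_le_mul_of_nonneg_right hSc_cs (measureReal_nonneg (μ := ν) (s := S))]

section Revenue

variable {F : Measure ℝ}

lemma rev_le_self [IsProbabilityMeasure F] {q : ℝ} (hq : 0 ≤ q) : rev F q ≤ q :=
  mul_le_of_le_one_right hq measureReal_le_one

lemma rev_le_setIntegral_Ici [IsFiniteMeasure F] (hint : Integrable (fun x => x) F) (q : ℝ) :
    rev F q ≤ ∫ x in Ici q, x ∂F := by
  rw [rev, mul_comm]
  exact setIntegral_ge_of_const_le measurableSet_Ici (measure_ne_top _ _) (fun x hx => hx)
    hint.integrableOn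

lemma setIntegral_Ici_anti (hint : Integrable (fun x => x) F) {p q : ℝ} (hp : 0 ≤ p)
    (hpq : p ≤ q) : ∫ x in Ici q, x ∂F ≤ ∫ x in Ici p, x ∂F :=
  setIntegral_mono_set hint.integrableOn
    ((ae_restrict_mem measurableSet_Ici).mono fun _ hx => hp.trans hx)
    (Ici_subset_Ici.mpr hpq).eventuallyLE

lemma opt_le {B : ℝ} (hB : 0 ≤ B) (h : ∀ q, 0 ≤ q → rev F q ≤ B) : opt F ≤ B :=
  Real.iSup_le (fun q => Real.iSup_le (h q) hB) hB

end Revenue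

namespace MeanVarLe

variable {F : Measure ℝ} {μ σ p : ℝ}

lemma integrable_sub_mean (hF : MeanVarLe F μ σ) : Integrable (fun x => x - μ) F :=
  have := hF.prob
  hF.int_mean.sub (integrable_const μ)

lemma integrable_sub_mean_sq (hF : MeanVarLe F μ σ) : Integrable (fun x => (x - μ) ^ 2) F := by
  have := hF.prob
  simp_rw [sub_sq]
  exact (hF.int_sq.sub (hF.int_mean.const_mul _ |>.mul_const _)).add (integrable_const _)

lemma integral_sub_mean (hF : MeanVarLe F μ σ) : ∫ x, (x - μ) ∂F = 0 := by
  have := hF.prob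
  rw [integral_sub hF.int_mean (integrable_const μ), hF.mean, integral_const, probReal_univ,
    one_smul, sub_self]

lemma setIntegral_Iio_sub_mean (hF : MeanVarLe F μ σ) (p : ℝ) :
    ∫ x in Iio p, (x - μ) ∂F = -∫ x in Ici p, (x - μ) ∂F := by
  have h := integral_add_compl (measurableSet_Ici (a := p)) hF.integrable_sub_mean
  rw [compl_Ici, hF.integral_sub_mean] at h
  linarith

lemma sq_setIntegral_Ici_sub_le (hF : MeanVarLe F μ σ) (p : ℝ) :
    (∫ x in Ici p, (x - μ) ∂F) ^ 2 ≤ σ ^ 2 * F.real (Ici p) * F.real (Iio p) := by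
  have := hF.prob
  have h := sq_setIntegral_le_of_integral_eq_zero F hF.integrable_sub_mean
    hF.integrable_sub_mean_sq hF.integral_sub_mean (measurableSet_Ici (a := p))
  rw [compl_Ici] at h
  refine h.trans ?_
  gcongr
  exact hF.var_le

lemma sub_mul_measureReal_Iio_le (hF : MeanVarLe F μ σ) (p : ℝ) :
    (μ - p) * F.real (Iio p) ≤ ∫ x in Ici p, (x - μ) ∂F := by
  have := hF.prob
  have h : ∫ x in Iio p, (x - μ) ∂F ≤ ∫ x in Iio p, (p - μ) ∂F :=
    setIntegral_mono_on hF.integrable_sub_mean.integrableOn integrableOn_const measurableSet_Iio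
      fun x (hx : x < p) => by linarith
  rw [hF.setIntegral_Iio_sub_mean, setIntegral_const, smul_eq_mul] at h
  linarith

lemma setIntegral_Ici_sub_mul_le (hF : MeanVarLe F μ σ) (hpμ : p ≤ μ) :
    (∫ x in Ici p, (x - μ) ∂F) * (μ - p) ≤ σ ^ 2 * F.real (Ici p) := by
  have hs_lower := hF.sub_mul_measureReal_Iio_le p
  have hs_sq := hF.sq_setIntegral_Ici_sub_le p
  set s := ∫ x in Ici p, (x - μ) ∂F
  rcases (measureReal_nonneg (μ := F) (s := Iio p)).eq_or_lt with hr' | hr'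
  · rw [← hr', mul_zero] at hs_sq
    rw [pow_eq_zero_iff two_ne_zero |>.mp (le_antisymm hs_sq (sq_nonneg s)), zero_mul]
    positivity
  · have hs : 0 ≤ s := (mul_nonneg (sub_nonneg.2 hpμ) hr'.le).trans hs_lower
    refine le_of_mul_le_mul_right ?_ hr'
    nlinarith [mul_le_mul_of_nonneg_left hs_lower hs]

/-- Cantelli's inequality. -/
lemma sq_sub_le_measureReal_Ici_mul (hF : MeanVarLe F μ σ) (hpμ : p ≤ μ) :
    (μ - p) ^ 2 ≤ F.real (Ici p) * ((μ - p) ^ 2 + σ ^ 2) := by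
  have := hF.prob
  have h := mul_le_mul_of_nonneg_left (hF.sub_mul_measureReal_Iio_le p) (sub_nonneg.2 hpμ)
  have hsum := probReal_add_probReal_compl (μ := F) (measurableSet_Ici (a := p))
  rw [compl_Ici] at hsum
  nlinarith [hF.setIntegral_Ici_sub_mul_le hpμ]

lemma le_mul_rev (hF : MeanVarLe F μ σ) (hp : 0 ≤ p) (hpμ : p < μ) :
    p ≤ (1 + σ ^ 2 / (μ - p) ^ 2) * rev F p := by
  have hd : 0 < (μ - p) ^ 2 := by nlinarith
  have h := mul_le_mul_of_nonneg_left (hF.sq_sub_le_measureReal_Ici_mul hpμ.le) hp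
  rw [rev, ← measureReal_def, one_add_div hd.ne', div_mul_eq_mul_div, le_div_iff₀ hd]
  linarith

lemma setIntegral_Ici_le_mul_rev (hF : MeanVarLe F μ σ) (hp : 0 < p) (hpμ : p < μ) :
    ∫ x in Ici p, x ∂F ≤ (μ / p + σ ^ 2 / (p * (μ - p))) * rev F p := by
  have := hF.prob
  have hd : 0 < μ - p := sub_pos.2 hpμ
  have htail : ∫ x in Ici p, x ∂F = ∫ x in Ici p, (x - μ) ∂F + μ * F.real (Ici p) := by
    rw [integral_sub hF.int_mean.integrableOn integrableOn_const, setIntegral_const,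
      smul_eq_mul]
    ring
  have hrhs : (μ / p + σ ^ 2 / (p * (μ - p))) * rev F p
      = σ ^ 2 * F.real (Ici p) / (μ - p) + μ * F.real (Ici p) := by
    rw [rev, ← measureReal_def]
    field_simp
    ring
  rw [htail, hrhs, add_le_add_iff_right, le_div_iff₀ hd]
  exact hF.setIntegral_Ici_sub_mul_le hpμ.le

end MeanVarLe

theorem stmt2_general (μ σ p : ℝ) (hp0 : 0 < p) (hpμ : p < μ)
    (F : Measure ℝ) (hF : MeanVarLe F μ σ) :
    opt F ≤ max (1 + σ ^ 2 / (μ - p) ^ 2) (μ / p + σ ^ 2 / (p * (μ - p))) * rev F p := by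
  have := hF.prob
  have hrev : 0 ≤ rev F p := mul_nonneg hp0.le measureReal_nonneg
  refine opt_le (by positivity) fun q hq => ?_
  rcases le_or_gt q p with hqp | hpq
  · calc rev F q ≤ p := (rev_le_self hq).trans hqp
      _ ≤ (1 + σ ^ 2 / (μ - p) ^ 2) * rev F p := hF.le_mul_rev hp0.le hpμ
      _ ≤ _ := by gcongr; exact le_max_left _ _
  · calc rev F q ≤ ∫ x in Ici p, x ∂F :=
          (rev_le_setIntegral_Ici hF.int_mean q).trans
            (setIntegral_Ici_anti hF.int_mean hp0.le hpq.le)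
      _ ≤ (μ / p + σ ^ 2 / (p * (μ - p))) * rev F p := hF.setIntegral_Ici_le_mul_rev hp0 hpμ
      _ ≤ _ := by gcongr; exact le_max_right _ _

/-- For `μ > 0`, `σ ≥ 0`, `0 < p < μ`, and any `(μ,σ)`-distributed `F`,
`OPT(F) ≤ max{1 + σ²/(μ−p)², μ/p + σ²/(p(μ−p))} · p·P(X ≥ p)`. -/
theorem stmt2 (μ σ p : ℝ) (hμ : 0 < μ) (hσ : 0 ≤ σ) (hp0 : 0 < p) (hpμ : p < μ)
    (F : Measure ℝ) (hF : MeanVarLe F μ σ) :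
    opt F ≤ max (1 + σ ^ 2 / (μ - p) ^ 2) (μ / p + σ ^ 2 / (p * (μ - p))) * rev F p :=
  stmt2_general μ σ p hp0 hpμ F hF
end

section
/- Let μ > 0 and σ > 0, and set r = σ/μ. Then: (i) the equation (ρ−1)³/(2ρ−1)² = r² has a unique solution ρ in [1,∞); (ii) the equation (μ−p)³/(2p−μ) = σ² has a unique solution p* in (μ/2, μ), and p* = ρ·μ/(2ρ−1); (iii) the infimum inf_{0 < p < μ} max{ 1 + σ²/(μ−p)², μ/p + σ²/(p(μ−p)) } equals ρ and is attained at p = p*. -/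
/-!
Write `f ρ = (ρ - 1)³ / (2ρ - 1)²`; it increases strictly from `0` to `∞` on `[1, ∞)`, which gives
`ρ`. Put `p* = ρμ / (2ρ - 1)`, so that `μ - p* = μ(ρ - 1)/(2ρ - 1)` and `2p* - μ = μ/(2ρ - 1)`;
with `f ρ = (σ/μ)²` both branches of the max equal `ρ` at `p*`. The first branch increases in `p`,
so it is `≥ ρ` to the right of `p*`. To the left, `p(μ - p)` times the second branch minus `ρ` is
the convex quadratic `ρp² - (ρ + 1)μp + μ² + σ²`, which vanishes at `p*` and has its vertex to the
right of `p*`.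
-/

open Set

theorem strictMonoOn_cube_div_sq :
    StrictMonoOn (fun ρ : ℝ => (ρ - 1) ^ 3 / (2 * ρ - 1) ^ 2) (Ici 1) := by
  intro a (ha : 1 ≤ a) b (hb : 1 ≤ b) hab
  rw [div_lt_div_iff₀ (by nlinarith) (by nlinarith)]
  have hcube : (a - 1) ^ 3 < (b - 1) ^ 3 := by gcongr
  nlinarith [mul_nonneg (mul_nonneg (sq_nonneg (a - 1)) (sq_nonneg (b - 1))) (sub_nonneg.2 hab.le),
    mul_nonneg (mul_nonneg (sub_nonneg.2 ha) (sub_nonneg.2 hb))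
      (mul_nonneg (by linarith : (0 : ℝ) ≤ b - 1 + (a - 1)) (sub_nonneg.2 hab.le))]

theorem exists_cube_div_sq_eq {s : ℝ} (hs : 0 ≤ s) :
    ∃ ρ : ℝ, 1 ≤ ρ ∧ (ρ - 1) ^ 3 / (2 * ρ - 1) ^ 2 = s := by
  have hcont : ContinuousOn (fun x : ℝ => (x - 1) ^ 3 / (2 * x - 1) ^ 2) (Icc 1 (4 * s + 2)) :=
    ContinuousOn.div (by fun_prop) (by fun_prop) fun x hx => pow_ne_zero _ (by linarith [hx.1])
  have hs_mem : s ∈ Icc ((fun x : ℝ => (x - 1) ^ 3 / (2 * x - 1) ^ 2) 1)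
      ((fun x : ℝ => (x - 1) ^ 3 / (2 * x - 1) ^ 2) (4 * s + 2)) := by
    refine ⟨by simpa using hs, ?_⟩
    simp only
    rw [le_div_iff₀ (by nlinarith)]
    nlinarith
  obtain ⟨ρ, hρ, hfρ⟩ := intermediate_value_Icc (by linarith) hcont hs_mem
  exact ⟨ρ, hρ.1, hfρ⟩

theorem existsUnique_cube_div_sq_eq {s : ℝ} (hs : 0 ≤ s) :
    ∃! ρ : ℝ, 1 ≤ ρ ∧ (ρ - 1) ^ 3 / (2 * ρ - 1) ^ 2 = s := by
  obtain ⟨ρ, hρ, hfρ⟩ := exists_cube_div_sq_eq hs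
  exact ⟨ρ, ⟨hρ, hfρ⟩, fun y ⟨hy, hfy⟩ =>
    strictMonoOn_cube_div_sq.injOn hy hρ (hfy.trans hfρ.symm)⟩

theorem strictAntiOn_cube_div {μ : ℝ} :
    StrictAntiOn (fun p : ℝ => (μ - p) ^ 3 / (2 * p - μ)) (Ioo (μ / 2) μ) := by
  rintro a ⟨ha, -⟩ b ⟨-, hb⟩ hab
  have ha' : 0 < 2 * a - μ := by linarith
  have hb' : 0 < μ - b := by linarith
  calc (μ - b) ^ 3 / (2 * b - μ) < (μ - b) ^ 3 / (2 * a - μ) := by gcongr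
    _ ≤ (μ - a) ^ 3 / (2 * a - μ) := by gcongr

theorem sub_optimal {μ ρ : ℝ} (h : 2 * ρ - 1 ≠ 0) :
    μ - ρ * μ / (2 * ρ - 1) = μ * (ρ - 1) / (2 * ρ - 1) := by
  rw [eq_div_iff h, sub_mul, div_mul_cancel₀ _ h]
  ring

theorem div_add_sq_div_mul_sub {μ σ p : ℝ} (hp : p ≠ 0) (hμp : μ - p ≠ 0) :
    μ / p + σ ^ 2 / (p * (μ - p)) = (μ * (μ - p) + σ ^ 2) / (p * (μ - p)) := by
  field_simp

section Optimum

variable {μ σ ρ : ℝ} (hμ : 0 < μ) (hρ : 1 < ρ)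
include hμ hρ

theorem optimal_mem_Ioo : ρ * μ / (2 * ρ - 1) ∈ Ioo (μ / 2) μ := by
  have h : 0 < 2 * ρ - 1 := by linarith
  constructor
  · rw [lt_div_iff₀ h]; nlinarith
  · rw [div_lt_iff₀ h]; nlinarith

variable (hρσ : σ ^ 2 * (2 * ρ - 1) ^ 2 = μ ^ 2 * (ρ - 1) ^ 3)
include hρσ

theorem cube_div_optimal :
    (μ - ρ * μ / (2 * ρ - 1)) ^ 3 / (2 * (ρ * μ / (2 * ρ - 1)) - μ) = σ ^ 2 := by
  have h : 2 * ρ - 1 ≠ 0 := by linarith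
  have h' : ρ - 1 ≠ 0 := by linarith
  have hμ' : μ ≠ 0 := hμ.ne'
  rw [sub_optimal h, show 2 * (ρ * μ / (2 * ρ - 1)) - μ = μ / (2 * ρ - 1) by field_simp; ring]
  field_simp
  rw [div_eq_iff (pow_ne_zero 2 (by linarith))]
  linear_combination -hρσ

theorem one_add_div_optimal : 1 + σ ^ 2 / (μ - ρ * μ / (2 * ρ - 1)) ^ 2 = ρ := by
  have h : 2 * ρ - 1 ≠ 0 := by linarith
  have h' : ρ - 1 ≠ 0 := by linarith
  have hμ' : μ ≠ 0 := hμ.ne'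
  rw [sub_optimal h]
  field_simp
  linear_combination hρσ

theorem div_add_div_optimal :
    μ / (ρ * μ / (2 * ρ - 1)) + σ ^ 2 / (ρ * μ / (2 * ρ - 1) * (μ - ρ * μ / (2 * ρ - 1))) = ρ := by
  have h : 2 * ρ - 1 ≠ 0 := by linarith
  have h' : ρ - 1 ≠ 0 := by linarith
  have hμ' : μ ≠ 0 := hμ.ne'
  rw [sub_optimal h]
  field_simp
  linear_combination hρσ

theorem le_one_add_div_of_optimal_le {p : ℝ} (hp : ρ * μ / (2 * ρ - 1) ≤ p) (hpμ : p < μ) :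
    ρ ≤ 1 + σ ^ 2 / (μ - p) ^ 2 := by
  calc ρ = 1 + σ ^ 2 / (μ - ρ * μ / (2 * ρ - 1)) ^ 2 := (one_add_div_optimal hμ hρ hρσ).symm
    _ ≤ 1 + σ ^ 2 / (μ - p) ^ 2 := by gcongr

theorem le_div_add_div_of_le_optimal {p : ℝ} (hp : 0 < p) (hpP : p ≤ ρ * μ / (2 * ρ - 1)) :
    ρ ≤ μ / p + σ ^ 2 / (p * (μ - p)) := by
  set P := ρ * μ / (2 * ρ - 1) with hP
  have hPmem := optimal_mem_Ioo hμ hρ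
  have hvertex : ρ * (p + P) ≤ (ρ + 1) * μ := by
    have : 2 * ρ * P ≤ (ρ + 1) * μ := by
      rw [hP, ← mul_div_assoc, div_le_iff₀ (by linarith)]; nlinarith
    nlinarith
  have hroot : ρ * P ^ 2 - (ρ + 1) * μ * P + μ ^ 2 + σ ^ 2 = 0 := by
    have hB := div_add_div_optimal hμ hρ hρσ
    rw [← hP, div_add_sq_div_mul_sub (by linarith [hPmem.1]) (by linarith [hPmem.2]),
      div_eq_iff (by nlinarith [hPmem.1, hPmem.2])] at hB
    linear_combination hB
  rw [div_add_sq_div_mul_sub hp.ne' (by linarith [hPmem.2]),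
    le_div_iff₀ (by nlinarith [hPmem.2])]
  nlinarith [mul_nonneg (sub_nonneg.2 hpP) (sub_nonneg.2 hvertex)]

theorem le_max_of_mem_Ioo {p : ℝ} (hp : p ∈ Ioo 0 μ) :
    ρ ≤ max (1 + σ ^ 2 / (μ - p) ^ 2) (μ / p + σ ^ 2 / (p * (μ - p))) := by
  rcases le_total p (ρ * μ / (2 * ρ - 1)) with hle | hge
  · exact le_max_of_le_right (le_div_add_div_of_le_optimal hμ hρ hρσ hp.1 hle)
  · exact le_max_of_le_left (le_one_add_div_of_optimal_le hμ hρ hρσ hge hp.2)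

theorem eq_optimal_of_cube_div_eq {p : ℝ} (hp : p ∈ Ioo (μ / 2) μ)
    (hpσ : (μ - p) ^ 3 / (2 * p - μ) = σ ^ 2) : p = ρ * μ / (2 * ρ - 1) :=
  strictAntiOn_cube_div.injOn hp (optimal_mem_Ioo hμ hρ)
    (hpσ.trans (cube_div_optimal hμ hρ hρσ).symm)

end Optimum

/-- For `μ, σ > 0` and `r = σ/μ`:
(i) `(ρ−1)³/(2ρ−1)² = r²` has a unique solution `ρ ∈ [1,∞)`;
(ii) `(μ−p)³/(2p−μ) = σ²` has a unique solution `p* ∈ (μ/2, μ)`, and `p* = ρμ/(2ρ−1)`;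
(iii) `inf_{0<p<μ} max{1 + σ²/(μ−p)², μ/p + σ²/(p(μ−p))}` equals `ρ` and is attained
at `p = p*`. -/
theorem stmt4 (μ σ : ℝ) (hμ : 0 < μ) (hσ : 0 < σ) (r : ℝ) (hr : r = σ / μ) :
    (∃! ρ : ℝ, 1 ≤ ρ ∧ (ρ - 1) ^ 3 / (2 * ρ - 1) ^ 2 = r ^ 2) ∧
    ∀ ρ : ℝ, 1 ≤ ρ → (ρ - 1) ^ 3 / (2 * ρ - 1) ^ 2 = r ^ 2 →
      (∃! p : ℝ, p ∈ Set.Ioo (μ / 2) μ ∧ (μ - p) ^ 3 / (2 * p - μ) = σ ^ 2) ∧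
      (∀ p : ℝ, p ∈ Set.Ioo (μ / 2) μ → (μ - p) ^ 3 / (2 * p - μ) = σ ^ 2 →
        p = ρ * μ / (2 * ρ - 1)) ∧
      IsLeast
        ((fun p : ℝ => max (1 + σ ^ 2 / (μ - p) ^ 2) (μ / p + σ ^ 2 / (p * (μ - p)))) ''
          Set.Ioo 0 μ) ρ ∧
      max (1 + σ ^ 2 / (μ - ρ * μ / (2 * ρ - 1)) ^ 2)
          (μ / (ρ * μ / (2 * ρ - 1)) +
            σ ^ 2 / (ρ * μ / (2 * ρ - 1) * (μ - ρ * μ / (2 * ρ - 1)))) = ρ := by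
  refine ⟨existsUnique_cube_div_sq_eq (sq_nonneg r), fun ρ hρ1 hρr => ?_⟩
  have hρσ : σ ^ 2 * (2 * ρ - 1) ^ 2 = μ ^ 2 * (ρ - 1) ^ 3 := by
    rw [hr, div_eq_iff (by nlinarith)] at hρr
    field_simp at hρr
    linear_combination -hρr
  have hρ : 1 < ρ := by
    refine hρ1.lt_of_ne fun h => ?_
    subst h
    nlinarith
  have hmax : max (1 + σ ^ 2 / (μ - ρ * μ / (2 * ρ - 1)) ^ 2)
      (μ / (ρ * μ / (2 * ρ - 1)) +
        σ ^ 2 / (ρ * μ / (2 * ρ - 1) * (μ - ρ * μ / (2 * ρ - 1)))) = ρ := by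
    rw [one_add_div_optimal hμ hρ hρσ, div_add_div_optimal hμ hρ hρσ, max_self]
  have hP := optimal_mem_Ioo hμ hρ
  have huniq := @eq_optimal_of_cube_div_eq μ σ ρ hμ hρ hρσ
  refine ⟨⟨_, ⟨hP, cube_div_optimal hμ hρ hρσ⟩, fun p hp => huniq hp.1 hp.2⟩,
    fun _ => huniq, ⟨⟨_, ⟨by linarith [hP.1], hP.2⟩, hmax⟩, ?_⟩, hmax⟩
  rintro _ ⟨p, hp, rfl⟩
  exact le_max_of_mem_Ioo hμ hρ hρσ hp
end

section
/- For every r ≥ 0, the unique solution ρ_D(r) ∈ [1,∞) of the equation (ρ−1)³/(2ρ−1)² = r² satisfies the two-sided bound 1 + 4r² ≤ ρ_D(r) ≤ 2 + 4r². -/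
/-!
With `x = ρ - 1` the left-hand side is `x³ / (2x + 1)²`, which is continuous and strictly
increasing on `x ≥ 0` and squeezed between `(x - 1) / 4` and `x / 4`. Strict monotonicity gives
uniqueness, the intermediate value theorem on `[1, 2 + 4r²]` gives existence, and the squeeze
turns `x³ / (2x + 1)² = r²` into `4r² ≤ x ≤ 1 + 4r²`.
-/

open Set

noncomputable def cubicRatio (ρ : ℝ) : ℝ := (ρ - 1) ^ 3 / (2 * ρ - 1) ^ 2

lemma two_mul_sub_one_sq_pos {ρ : ℝ} (hρ : 1 ≤ ρ) : 0 < (2 * ρ - 1) ^ 2 :=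
  pow_pos (by linarith) 2

lemma continuousOn_cubicRatio : ContinuousOn cubicRatio (Ici 1) :=
  ContinuousOn.div (by fun_prop) (by fun_prop) fun _ hρ => (two_mul_sub_one_sq_pos hρ).ne'

lemma strictMonoOn_cubicRatio : StrictMonoOn cubicRatio (Ici 1) := by
  intro a ha b hb hab
  rw [mem_Ici] at ha hb
  rw [cubicRatio, cubicRatio,
    div_lt_div_iff₀ (two_mul_sub_one_sq_pos ha) (two_mul_sub_one_sq_pos hb)]
  set x := a - 1
  set y := b - 1
  have hx : 0 ≤ x := by linarith
  have hxy : 0 < y - x := by linarith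
  have factor : (b - 1) ^ 3 * (2 * a - 1) ^ 2 - (a - 1) ^ 3 * (2 * b - 1) ^ 2
      = (y - x) * (4 * x ^ 2 * y ^ 2 + 4 * x * y * (x + y) + (x ^ 2 + x * y + y ^ 2)) := by
    ring
  have cofactor_pos :
      0 < 4 * x ^ 2 * y ^ 2 + 4 * x * y * (x + y) + (x ^ 2 + x * y + y ^ 2) := by
    have hy : 0 < y := by linarith
    positivity
  nlinarith [mul_pos hxy cofactor_pos]

lemma sub_two_div_four_le_cubicRatio {ρ : ℝ} (hρ : 1 ≤ ρ) :
    (ρ - 2) / 4 ≤ cubicRatio ρ := by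
  rw [cubicRatio, le_div_iff₀ (two_mul_sub_one_sq_pos hρ)]
  nlinarith

lemma cubicRatio_le_sub_one_div_four {ρ : ℝ} (hρ : 1 ≤ ρ) :
    cubicRatio ρ ≤ (ρ - 1) / 4 := by
  rw [cubicRatio, div_le_iff₀ (two_mul_sub_one_sq_pos hρ)]
  nlinarith [mul_nonneg (sub_nonneg.mpr hρ) (sub_nonneg.mpr hρ)]

lemma exists_cubicRatio_eq {c : ℝ} (hc : 0 ≤ c) : ∃ ρ, 1 ≤ ρ ∧ cubicRatio ρ = c := by
  have hM : (1 : ℝ) ≤ 2 + 4 * c := by linarith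
  have hmem : c ∈ Icc (cubicRatio 1) (cubicRatio (2 + 4 * c)) :=
    ⟨by simpa [cubicRatio] using hc, by linarith [sub_two_div_four_le_cubicRatio hM]⟩
  obtain ⟨ρ, hρ, hρc⟩ :=
    intermediate_value_Icc hM (continuousOn_cubicRatio.mono Icc_subset_Ici_self) hmem
  exact ⟨ρ, hρ.1, hρc⟩

theorem stmt5_general (r : ℝ) :
    (∃! ρ : ℝ, 1 ≤ ρ ∧ (ρ - 1) ^ 3 / (2 * ρ - 1) ^ 2 = r ^ 2) ∧
    ∀ ρ : ℝ, 1 ≤ ρ → (ρ - 1) ^ 3 / (2 * ρ - 1) ^ 2 = r ^ 2 →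
      1 + 4 * r ^ 2 ≤ ρ ∧ ρ ≤ 2 + 4 * r ^ 2 := by
  refine ⟨?_, fun ρ hρ heq => ?_⟩
  · obtain ⟨ρ, hρ, heq⟩ := exists_cubicRatio_eq (sq_nonneg r)
    exact ⟨ρ, ⟨hρ, heq⟩, fun σ ⟨hσ, hσ'⟩ =>
      strictMonoOn_cubicRatio.injOn (mem_Ici.mpr hσ) (mem_Ici.mpr hρ) (hσ'.trans heq.symm)⟩
  · change cubicRatio ρ = r ^ 2 at heq
    constructor
    · linarith [cubicRatio_le_sub_one_div_four hρ]
    · linarith [sub_two_div_four_le_cubicRatio hρ]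

/-- For every `r ≥ 0` the equation `(ρ−1)³/(2ρ−1)² = r²` has a unique
solution `ρ_D(r) ∈ [1,∞)`, and it satisfies `1 + 4r² ≤ ρ_D(r) ≤ 2 + 4r²`. -/
theorem stmt5 (r : ℝ) (hr : 0 ≤ r) :
    (∃! ρ : ℝ, 1 ≤ ρ ∧ (ρ - 1) ^ 3 / (2 * ρ - 1) ^ 2 = r ^ 2) ∧
    ∀ ρ : ℝ, 1 ≤ ρ → (ρ - 1) ^ 3 / (2 * ρ - 1) ^ 2 = r ^ 2 →
      1 + 4 * r ^ 2 ≤ ρ ∧ ρ ≤ 2 + 4 * r ^ 2 :=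
  stmt5_general r
end

section
/- Let μ > 0 and σ ≥ 0, and let (π₁,π₂) with 0 < π₁ ≤ π₂ be the unique solution of the system π₁(1 + ln(π₂/π₁)) = μ and π₁(2π₂ − π₁) = μ² + σ². Then the maximin robust revenue over randomized price mechanisms equals π₁: sup over probability measures A on [0,∞) of inf_{F ∈ 𝔽_{μ,σ}} REV(A;F) equals π₁, and the supremum is attained by the log-lottery P^log_{μ,σ}, i.e., REV(P^log_{μ,σ};F) ≥ π₁ for every F ∈ 𝔽_{μ,σ}. -/
open MeasureTheory

/-- The log-lottery `P^log` with parameters `p1 ≤ p2`: the probability measure supported on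
`[p1,p2]` whose cdf on `[p1,p2)` is
`x ↦ (p2·ln(x/p1) − (x−p1)) / (p2·ln(p2/p1) − (p2−p1))`
(for `p1 = p2` this is the point mass at `p1`). -/
structure IsLogLottery (A : Measure ℝ) (p1 p2 : ℝ) : Prop where
  prob : IsProbabilityMeasure A
  supp : A (Set.Icc p1 p2) = 1
  cdf : ∀ x ∈ Set.Ico p1 p2,
    A (Set.Iic x) = ENNReal.ofReal
      ((p2 * Real.log (x / p1) - (x - p1)) / (p2 * Real.log (p2 / p1) - (p2 - p1)))

/-!
Upper bound: the law of `min (π₁ / U) π₂`, `U` uniform on `(0, 1]`, has mean `μ` and variance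
exactly `σ²` by the two defining equations, and its tail is at most `π₁ / p`; so every posted
price, hence every lottery over prices, earns at most `π₁` against it.

Lower bound: by Tonelli, the revenue of a lottery `A` against `F` is `E_F[g(X)]`, where
`g(x) = ∫_{p ≤ x} p dA(p)` is the expected payment of a buyer with value `x`. For the
log-lottery, `g(x) = q(clamp x)` with `clamp` the projection onto `[π₁, π₂]` and `q` the concave
quadratic `q(c) = ((π₂ - π₁)² - (c - π₂)²) / (2Z)`, `Z` the normalizer of its cdf. Clamping moves
`x` towards the vertex `π₂`, so `g ≥ q`; and `E_F[q(X)]` depends only on the mean and the second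
moment of `F`, where the two equations make it at least `π₁`. When `π₁ = π₂`, both `F` and the
lottery are point masses at `μ`.
-/

open Set

section Moments

variable {F : Measure ℝ}

lemma integrable_sub_sq [IsFiniteMeasure F] (h1 : Integrable (fun x => x) F)
    (h2 : Integrable (fun x => x ^ 2) F) (a : ℝ) : Integrable (fun x => (x - a) ^ 2) F := by
  have : Integrable (fun x => x ^ 2 - (2 * a) * x + a ^ 2) F :=
    (h2.sub (h1.const_mul _)).add (integrable_const _)
  exact this.congr (.of_forall fun x => by ring)

lemma integral_sub_sq [IsProbabilityMeasure F] (h1 : Integrable (fun x => x) F)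
    (h2 : Integrable (fun x => x ^ 2) F) (a : ℝ) :
    ∫ x, (x - a) ^ 2 ∂F = ∫ x, (x - ∫ y, y ∂F) ^ 2 ∂F + (∫ y, y ∂F - a) ^ 2 := by
  set m := ∫ y, y ∂F
  have hdiff : ∫ x, ((x - a) ^ 2 - (x - m) ^ 2) ∂F = (m - a) ^ 2 := by
    have hlin : ∀ x, (x - a) ^ 2 - (x - m) ^ 2 = 2 * (m - a) * x + (a ^ 2 - m ^ 2) := by
      intro x; ring
    simp only [hlin]
    rw [integral_add (h1.const_mul _) (integrable_const _), integral_const_mul,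
      integral_const, probReal_univ, one_smul]
    ring
  rw [integral_sub (integrable_sub_sq h1 h2 a) (integrable_sub_sq h1 h2 m)] at hdiff
  linarith

lemma MeanVarLe.ae_eq {m : ℝ} (hF : MeanVarLe F m 0) : ∀ᵐ x ∂F, x = m := by
  have hvar : ∫ x, (x - m) ^ 2 ∂F = 0 :=
    le_antisymm (by simpa using hF.var_le) (integral_nonneg fun x => sq_nonneg _)
  have := hF.prob
  rw [integral_eq_zero_iff_of_nonneg (fun x => sq_nonneg _)
    (integrable_sub_sq hF.int_mean hF.int_sq m)] at hvar
  filter_upwards [hvar] with x hx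
  simpa [sub_eq_zero] using hx

end Moments

lemma Measure.ext_of_Iic_of_mem_Ico {μ ν : Measure ℝ} [IsProbabilityMeasure μ]
    [IsProbabilityMeasure ν] {a b : ℝ} (hμ : μ (Icc a b) = 1) (hν : ν (Icc a b) = 1)
    (h : ∀ x ∈ Ico a b, μ (Iic x) = ν (Iic x)) : μ = ν := by
  have below : ∀ (m : Measure ℝ) [IsProbabilityMeasure m], m (Icc a b) = 1 →
      ∀ x < a, m (Iic x) = 0 := fun m _ hm x hx =>
    measure_mono_null (t := (Icc a b)ᶜ) (fun t ht h' => absurd (h'.1.trans ht) hx.not_ge)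
      ((prob_compl_eq_zero_iff measurableSet_Icc).2 hm)
  have above : ∀ (m : Measure ℝ) [IsProbabilityMeasure m], m (Icc a b) = 1 →
      ∀ x, b ≤ x → m (Iic x) = 1 := fun m _ hm x hx =>
    le_antisymm prob_le_one (hm ▸ measure_mono fun t ht => ht.2.trans hx)
  refine Measure.ext_of_Iic μ ν fun x => ?_
  rcases lt_or_ge x a with hxa | hax
  · rw [below μ hμ x hxa, below ν hν x hxa]
  rcases lt_or_ge x b with hxb | hbx
  · exact h x ⟨hax, hxb⟩
  · rw [above μ hμ x hbx, above ν hν x hbx]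

lemma Iic_inter_Ioc_eq_Ioc_max_min {α : Type*} [LinearOrder α] (a b x : α) :
    Iic x ∩ Ioc a b = Ioc a (max a (min x b)) := by
  ext t
  simp only [mem_inter_iff, mem_Iic, mem_Ioc, le_max_iff, le_min_iff]
  constructor
  · rintro ⟨htx, hat, htb⟩
    exact ⟨hat, .inr ⟨htx, htb⟩⟩
  · rintro ⟨hat, hta | ⟨htx, htb⟩⟩
    · exact absurd hta hat.not_ge
    · exact ⟨htx, hat, htb⟩

lemma lintegral_Ioc_ofReal {f : ℝ → ℝ} {a b : ℝ} (hab : a ≤ b) (hf : ContinuousOn f (Icc a b))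
    (h0 : ∀ x ∈ Ioc a b, 0 ≤ f x) :
    ∫⁻ x in Ioc a b, ENNReal.ofReal (f x) = ENNReal.ofReal (∫ x in a..b, f x) := by
  rw [intervalIntegral.integral_of_le hab, ofReal_integral_eq_lintegral_ofReal
    (hf.integrableOn_Icc.mono_set Ioc_subset_Icc_self)
    ((ae_restrict_iff' measurableSet_Ioc).2 (.of_forall h0))]

section Revenue

lemma rev_measurable (F : Measure ℝ) : Measurable (rev F) :=
  measurable_id.mul <| ENNReal.measurable_toReal.comp <|
    Antitone.measurable fun _ _ hpq => measure_mono (Ici_subset_Ici.2 hpq)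

lemma rev_nonneg (F : Measure ℝ) {p : ℝ} (hp : 0 ≤ p) : 0 ≤ rev F p :=
  mul_nonneg hp ENNReal.toReal_nonneg

lemma IsPriceMech.ae_nonneg {A : Measure ℝ} (hA : IsPriceMech A) : ∀ᵐ p ∂A, 0 ≤ p :=
  measure_mono_null (fun p hp => by simpa using hp) hA.2

lemma mrev_nonneg {A : Measure ℝ} (hA : IsPriceMech A) (F : Measure ℝ) : 0 ≤ mrev A F :=
  integral_nonneg_of_ae <| hA.ae_nonneg.mono fun _ => rev_nonneg F

lemma mrev_le_of_rev_le {A F : Measure ℝ} (hA : IsPriceMech A) {c : ℝ}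
    (h : ∀ p, 0 ≤ p → rev F p ≤ c) : mrev A F ≤ c := by
  have := hA.1
  calc mrev A F ≤ ∫ _, c ∂A :=
        integral_mono_of_nonneg (hA.ae_nonneg.mono fun _ => rev_nonneg F) (integrable_const c)
          (hA.ae_nonneg.mono h)
    _ = c := by simp

lemma lintegral_ofReal_rev {A F : Measure ℝ} [SFinite A] [IsFiniteMeasure F]
    (hA : ∀ᵐ p ∂A, 0 ≤ p) :
    ∫⁻ p, ENNReal.ofReal (rev F p) ∂A = ∫⁻ x, ∫⁻ p in Iic x, ENNReal.ofReal p ∂A ∂F := by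
  have hker : Measurable (Function.uncurry fun p x : ℝ =>
      (Ici p).indicator (fun _ => ENNReal.ofReal p) x) :=
    measurable_fst.ennreal_ofReal.indicator (measurableSet_le measurable_fst measurable_snd)
  calc ∫⁻ p, ENNReal.ofReal (rev F p) ∂A
      = ∫⁻ p, ∫⁻ x, (Ici p).indicator (fun _ => ENNReal.ofReal p) x ∂F ∂A := by
        refine lintegral_congr_ae (hA.mono fun p hp => ?_)
        dsimp only
        rw [lintegral_indicator measurableSet_Ici, setLIntegral_const, rev,
          ENNReal.ofReal_mul hp, ENNReal.ofReal_toReal (measure_ne_top F _)]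
    _ = ∫⁻ x, ∫⁻ p, (Iic x).indicator (fun p => ENNReal.ofReal p) p ∂A ∂F := by
        rw [lintegral_lintegral_swap hker.aemeasurable]
        rfl
    _ = _ := by simp only [lintegral_indicator measurableSet_Iic]

lemma mrev_eq_integral {A F : Measure ℝ} [SFinite A] [IsFiniteMeasure F]
    (hA : ∀ᵐ p ∂A, 0 ≤ p) {g : ℝ → ℝ} (hg0 : ∀ x, 0 ≤ g x) (hgm : AEStronglyMeasurable g F)
    (hg : ∀ x, ∫⁻ p in Iic x, ENNReal.ofReal p ∂A = ENNReal.ofReal (g x)) :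
    mrev A F = ∫ x, g x ∂F := by
  rw [mrev, integral_eq_lintegral_of_nonneg_ae (hA.mono fun _ => rev_nonneg F)
      (rev_measurable F).aestronglyMeasurable,
    integral_eq_lintegral_of_nonneg_ae (.of_forall hg0) hgm, lintegral_ofReal_rev hA]
  simp only [hg]

end Revenue

lemma IsLogLottery.isPriceMech {A : Measure ℝ} {p1 p2 : ℝ} (hA : IsLogLottery A p1 p2)
    (hp1 : 0 < p1) : IsPriceMech A := by
  have := hA.prob
  refine ⟨hA.prob, measure_mono_null (t := (Icc p1 p2)ᶜ) (fun t ht h' => ?_)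
    ((prob_compl_eq_zero_iff measurableSet_Icc).2 hA.supp)⟩
  exact absurd (hp1.trans_le h'.1) (not_lt.2 (le_of_lt ht))

section LogLottery

variable {p1 p2 : ℝ}

noncomputable def logLotteryNormalizer (p1 p2 : ℝ) : ℝ :=
  p2 * Real.log (p2 / p1) - (p2 - p1)

noncomputable def logLotteryDensity (p1 p2 p : ℝ) : ℝ :=
  (p2 / p - 1) / logLotteryNormalizer p1 p2

noncomputable def logLottery (p1 p2 : ℝ) : Measure ℝ :=
  (volume.restrict (Ioc p1 p2)).withDensity fun p => ENNReal.ofReal (logLotteryDensity p1 p2 p)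

/-- The expected payment `∫_{[p1, c]} p dP^log(p)` of a buyer with value `c ∈ [p1, p2]`. -/
noncomputable def logLotteryPayment (p1 p2 c : ℝ) : ℝ :=
  ((p2 - p1) ^ 2 - (c - p2) ^ 2) / (2 * logLotteryNormalizer p1 p2)

lemma logLotteryNormalizer_pos (hp1 : 0 < p1) (h12 : p1 < p2) :
    0 < logLotteryNormalizer p1 p2 := by
  have hp2 : 0 < p2 := hp1.trans h12
  have hlog : Real.log (p1 / p2) < p1 / p2 - 1 :=
    Real.log_lt_sub_one_of_pos (by positivity) ((div_lt_one hp2).2 h12).ne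
  rw [Real.log_div hp1.ne' hp2.ne'] at hlog
  rw [logLotteryNormalizer, Real.log_div hp2.ne' hp1.ne']
  have : p2 * (p1 / p2 - 1) = p1 - p2 := by field_simp
  nlinarith

variable (hp1 : 0 < p1) (h12 : p1 < p2)
include hp1 h12

lemma logLotteryDensity_nonneg {p : ℝ} (hp : p ∈ Ioc p1 p2) : 0 ≤ logLotteryDensity p1 p2 p := by
  have hp0 : 0 < p := hp1.trans hp.1
  refine div_nonneg ?_ (logLotteryNormalizer_pos hp1 h12).le
  rw [sub_nonneg, le_div_iff₀ hp0, one_mul]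
  exact hp.2

lemma lintegral_logLotteryDensity {x : ℝ} (hx : x ∈ Icc p1 p2) :
    ∫⁻ p in Ioc p1 x, ENNReal.ofReal (logLotteryDensity p1 p2 p) = ENNReal.ofReal
      ((p2 * Real.log (x / p1) - (x - p1)) / logLotteryNormalizer p1 p2) := by
  have hpos : ∀ t ∈ Icc p1 x, 0 < t := fun t ht => hp1.trans_le ht.1
  have hcont : ContinuousOn (fun t => p2 / t - 1) (Icc p1 x) :=
    (continuousOn_const.div continuousOn_id fun t ht => (hpos t ht).ne').sub continuousOn_const
  have hderiv : ∀ t ∈ uIcc p1 x,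
      HasDerivAt (fun t => p2 * Real.log t - t) (p2 / t - 1) t := by
    intro t ht
    rw [uIcc_of_le hx.1] at ht
    simpa [div_eq_mul_inv] using
      ((Real.hasDerivAt_log (hpos t ht).ne').const_mul p2).fun_sub (hasDerivAt_id' t)
  rw [lintegral_Ioc_ofReal (f := logLotteryDensity p1 p2) hx.1 (hcont.div_const _) fun p hp =>
      logLotteryDensity_nonneg hp1 h12 ⟨hp.1, hp.2.trans hx.2⟩]
  unfold logLotteryDensity
  rw [intervalIntegral.integral_div, intervalIntegral.integral_eq_sub_of_hasDerivAt hderiv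
      (hcont.intervalIntegrable_of_Icc hx.1), Real.log_div (hpos x ⟨hx.1, le_rfl⟩).ne' hp1.ne']
  ring_nf

lemma logLottery_apply_of_Ioc_subset {s : Set ℝ} (hs : MeasurableSet s) (hsub : Ioc p1 p2 ⊆ s) :
    logLottery p1 p2 s = 1 := by
  have hZ := (logLotteryNormalizer_pos hp1 h12).ne'
  rw [logLottery, withDensity_apply _ hs, Measure.restrict_restrict hs, inter_eq_right.2 hsub,
    lintegral_logLotteryDensity hp1 h12 ⟨h12.le, le_rfl⟩, ← logLotteryNormalizer, div_self hZ,
    ENNReal.ofReal_one]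

lemma isLogLottery_logLottery : IsLogLottery (logLottery p1 p2) p1 p2 where
  prob := ⟨logLottery_apply_of_Ioc_subset hp1 h12 .univ (subset_univ _)⟩
  supp := logLottery_apply_of_Ioc_subset hp1 h12 measurableSet_Icc Ioc_subset_Icc_self
  cdf x hx := by
    rw [logLottery, withDensity_apply _ measurableSet_Iic,
      Measure.restrict_restrict measurableSet_Iic, Iic_inter_Ioc_of_le hx.2.le,
      lintegral_logLotteryDensity hp1 h12 ⟨hx.1, hx.2.le⟩, logLotteryNormalizer]

lemma IsLogLottery.eq_logLottery {A : Measure ℝ} (hA : IsLogLottery A p1 p2) :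
    A = logLottery p1 p2 := by
  have hnu := isLogLottery_logLottery hp1 h12
  have := hA.prob
  have := hnu.prob
  exact Measure.ext_of_Iic_of_mem_Ico hA.supp hnu.supp fun x hx => by rw [hA.cdf x hx, hnu.cdf x hx]

lemma setLIntegral_Iic_logLottery (x : ℝ) :
    ∫⁻ p in Iic x, ENNReal.ofReal p ∂logLottery p1 p2 =
      ENNReal.ofReal (logLotteryPayment p1 p2 (max p1 (min x p2))) := by
  set c := max p1 (min x p2)
  have hc : c ∈ Icc p1 p2 := ⟨le_max_left _ _, max_le h12.le (min_le_right _ _)⟩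
  have hZ := logLotteryNormalizer_pos hp1 h12
  have hpoint : ∀ p ∈ Ioc p1 c, ((fun p => ENNReal.ofReal (logLotteryDensity p1 p2 p)) *
      fun p => ENNReal.ofReal p) p = ENNReal.ofReal ((p2 - p) / logLotteryNormalizer p1 p2) := by
    intro p hp
    have hp0 : 0 < p := hp1.trans hp.1
    rw [Pi.mul_apply, ← ENNReal.ofReal_mul
      (logLotteryDensity_nonneg hp1 h12 ⟨hp.1, hp.2.trans hc.2⟩), logLotteryDensity]
    field_simp
  have hderiv : ∀ t ∈ uIcc p1 c, HasDerivAt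
      (fun t => -(t - p2) ^ 2 / (2 * logLotteryNormalizer p1 p2))
      ((p2 - t) / logLotteryNormalizer p1 p2) t := by
    intro t _
    refine ((((hasDerivAt_id' t).sub_const p2).fun_pow 2).fun_neg.div_const
      (2 * logLotteryNormalizer p1 p2)).congr_deriv ?_
    field_simp
    ring
  rw [logLottery, setLIntegral_withDensity_eq_setLIntegral_mul _
      (by unfold logLotteryDensity; fun_prop) (by fun_prop)
      measurableSet_Iic, Measure.restrict_restrict measurableSet_Iic, Iic_inter_Ioc_eq_Ioc_max_min,
    setLIntegral_congr_fun measurableSet_Ioc hpoint,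
    lintegral_Ioc_ofReal hc.1 (by fun_prop) fun p hp =>
      div_nonneg (sub_nonneg.2 (hp.2.trans hc.2)) hZ.le,
    intervalIntegral.integral_eq_sub_of_hasDerivAt hderiv
      (ContinuousOn.intervalIntegrable (by fun_prop)), logLotteryPayment]
  ring_nf

lemma logLotteryPayment_le_clamp (x : ℝ) :
    logLotteryPayment p1 p2 x ≤ logLotteryPayment p1 p2 (max p1 (min x p2)) := by
  have hZ := logLotteryNormalizer_pos hp1 h12
  have hclamp : (max p1 (min x p2) - p2) ^ 2 ≤ (x - p2) ^ 2 := by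
    rcases le_total x p1 with hx1 | hx1
    · rw [min_eq_left (hx1.trans h12.le), max_eq_left hx1]
      nlinarith
    rcases le_total x p2 with hx2 | hx2
    · rw [min_eq_left hx2, max_eq_right hx1]
    · rw [min_eq_right hx2, max_eq_right h12.le, sub_self, zero_pow two_ne_zero]
      positivity
  unfold logLotteryPayment
  gcongr

lemma logLotteryPayment_nonneg {c : ℝ} (hc : c ∈ Icc p1 p2) : 0 ≤ logLotteryPayment p1 p2 c := by
  have hZ := logLotteryNormalizer_pos hp1 h12
  unfold logLotteryPayment
  have : (c - p2) ^ 2 ≤ (p2 - p1) ^ 2 := by nlinarith [hc.1, hc.2]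
  positivity

variable {μ σ : ℝ} (heq1 : p1 * (1 + Real.log (p2 / p1)) = μ)
  (heq2 : p1 * (2 * p2 - p1) = μ ^ 2 + σ ^ 2)
include heq1 heq2

lemma le_integral_logLotteryPayment {F : Measure ℝ} (hF : MeanVarLe F μ σ) :
    p1 ≤ ∫ x, logLotteryPayment p1 p2 x ∂F := by
  have := hF.prob
  have hZ := logLotteryNormalizer_pos hp1 h12
  have hsq := integral_sub_sq hF.int_mean hF.int_sq p2
  rw [hF.mean] at hsq
  have key : (p2 - p1) ^ 2 - σ ^ 2 - (μ - p2) ^ 2 = p1 * (2 * logLotteryNormalizer p1 p2) := by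
    unfold logLotteryNormalizer
    linear_combination (-2 * p2) * heq1 + heq2
  unfold logLotteryPayment
  rw [integral_div, integral_sub (integrable_const _) (integrable_sub_sq hF.int_mean hF.int_sq p2),
    integral_const, probReal_univ, one_smul, le_div_iff₀ (by positivity), hsq]
  linarith [hF.var_le]

lemma le_mrev_logLottery {F : Measure ℝ} (hF : MeanVarLe F μ σ) :
    p1 ≤ mrev (logLottery p1 p2) F := by
  have := hF.prob
  have hA := isLogLottery_logLottery hp1 h12
  have := hA.prob
  have hZ := logLotteryNormalizer_pos hp1 h12
  set g := fun x => logLotteryPayment p1 p2 (max p1 (min x p2))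
  have hg0 (x : ℝ) : 0 ≤ g x := logLotteryPayment_nonneg hp1 h12
    ⟨le_max_left _ _, max_le h12.le (min_le_right _ _)⟩
  have hgc : Continuous g := by unfold g logLotteryPayment; fun_prop
  have hg_int : Integrable g F := by
    refine .mono' (integrable_const ((p2 - p1) ^ 2 / (2 * logLotteryNormalizer p1 p2)))
      hgc.aestronglyMeasurable (.of_forall fun x => ?_)
    rw [Real.norm_of_nonneg (hg0 x)]
    unfold g logLotteryPayment
    gcongr
    exact sub_le_self _ (sq_nonneg _)
  have hpay_int : Integrable (logLotteryPayment p1 p2) F :=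
    ((integrable_const _).sub (integrable_sub_sq hF.int_mean hF.int_sq p2)).div_const _
  rw [mrev_eq_integral (hA.isPriceMech hp1).ae_nonneg hg0 hgc.aestronglyMeasurable
    (setLIntegral_Iic_logLottery hp1 h12)]
  exact (le_integral_logLotteryPayment hp1 h12 heq1 heq2 hF).trans
    (integral_mono hpay_int hg_int (logLotteryPayment_le_clamp hp1 h12))

end LogLottery

lemma mrev_eq_of_isLogLottery_self {A F : Measure ℝ} {p : ℝ} (hA : IsLogLottery A p p)
    (hF : MeanVarLe F p 0) : mrev A F = p := by
  have := hA.prob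
  have := hF.prob
  have hAp : ∀ᵐ q ∂A, q = p := ae_iff.2 <|
    (prob_compl_eq_zero_iff (measurableSet_singleton p)).2 (by simpa using hA.supp)
  have hFp : F (Ici p) = 1 := (prob_compl_eq_zero_iff measurableSet_Ici).1 <|
    measure_mono_null (fun x (hx : ¬ p ≤ x) (h : x = p) => hx h.ge) hF.ae_eq
  rw [mrev, integral_eq_const (hAp.mono fun q hq => by rw [hq]), rev, hFp, ENNReal.toReal_one,
    mul_one]

lemma le_mrev_of_isLogLottery {μ σ p1 p2 : ℝ} (hp1 : 0 < p1) (hp12 : p1 ≤ p2)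
    (heq1 : p1 * (1 + Real.log (p2 / p1)) = μ) (heq2 : p1 * (2 * p2 - p1) = μ ^ 2 + σ ^ 2)
    {A F : Measure ℝ} (hA : IsLogLottery A p1 p2) (hF : MeanVarLe F μ σ) : p1 ≤ mrev A F := by
  rcases hp12.eq_or_lt with rfl | h12
  · have hμ : μ = p1 := by rw [← heq1, div_self hp1.ne', Real.log_one]; ring
    subst hμ
    have hσ : σ = 0 := pow_eq_zero_iff two_ne_zero |>.1 (by linear_combination -heq2)
    subst hσ
    exact (mrev_eq_of_isLogLottery_self hA hF).ge
  · rw [hA.eq_logLottery hp1 h12]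
    exact le_mrev_logLottery hp1 h12 heq1 heq2 hF

lemma exists_isLogLottery {p1 p2 : ℝ} (hp1 : 0 < p1) (hp12 : p1 ≤ p2) :
    ∃ A, IsLogLottery A p1 p2 := by
  rcases hp12.eq_or_lt with rfl | h12
  · exact ⟨Measure.dirac p1, inferInstance, by simp, fun x hx => by simp at hx⟩
  · exact ⟨_, isLogLottery_logLottery hp1 h12⟩

section WorstCase

variable {p1 p2 : ℝ}

/-- The law of `min (p1 / U) p2` for `U` uniform on `(0, 1]`. Its tail `P(X ≥ p) = p1 / p` on
`(p1, p2]` makes every posted price earn at most `p1`. -/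
noncomputable def truncEqualRevenue (p1 p2 : ℝ) : Measure ℝ :=
  (volume.restrict (Ioc (0 : ℝ) 1)).map fun u => min (p1 / u) p2

lemma isProbabilityMeasure_truncEqualRevenue : IsProbabilityMeasure (truncEqualRevenue p1 p2) :=
  have : IsProbabilityMeasure (volume.restrict (Ioc (0 : ℝ) 1)) := ⟨by simp⟩
  Measure.isProbabilityMeasure_map (by fun_prop)

lemma truncEqualRevenue_Iio_zero (hp1 : 0 ≤ p1) (hp2 : 0 ≤ p2) :
    truncEqualRevenue p1 p2 (Iio 0) = 0 := by
  rw [truncEqualRevenue, Measure.map_apply (by fun_prop) measurableSet_Iio,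
    Measure.restrict_apply' measurableSet_Ioc]
  refine measure_mono_null (fun u hu => ?_) measure_empty
  exact absurd hu.1 (not_lt.2 (le_min (div_nonneg hp1 hu.2.1.le) hp2))

lemma truncEqualRevenue_Ici_le {p : ℝ} (hp : 0 < p) :
    truncEqualRevenue p1 p2 (Ici p) ≤ ENNReal.ofReal (p1 / p) := by
  rw [truncEqualRevenue, Measure.map_apply (by fun_prop) measurableSet_Ici,
    Measure.restrict_apply' measurableSet_Ioc]
  calc _ ≤ volume (Ioc 0 (p1 / p)) := measure_mono fun u hu => by
        have hpu : p ≤ p1 / u := hu.1.trans (min_le_left _ _)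
        rw [le_div_iff₀ hu.2.1] at hpu
        exact ⟨hu.2.1, by rw [le_div_iff₀ hp]; linarith⟩
    _ = ENNReal.ofReal (p1 / p) := by simp

lemma rev_truncEqualRevenue_le (hp1 : 0 ≤ p1) {p : ℝ} (hp : 0 ≤ p) :
    rev (truncEqualRevenue p1 p2) p ≤ p1 := by
  rcases hp.eq_or_lt with rfl | hp
  · simp [rev, hp1]
  calc rev (truncEqualRevenue p1 p2) p ≤ p * (p1 / p) :=
        mul_le_mul_of_nonneg_left (ENNReal.toReal_le_of_le_ofReal (by positivity)
          (truncEqualRevenue_Ici_le hp)) hp.le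
    _ = p1 := mul_div_cancel₀ _ hp.ne'

lemma integrable_and_integral_truncEqualRevenue (hp1 : 0 < p1) (hp12 : p1 ≤ p2) {g : ℝ → ℝ}
    (hg : Continuous g) :
    Integrable g (truncEqualRevenue p1 p2) ∧
      ∫ x, g x ∂truncEqualRevenue p1 p2 = p1 / p2 * g p2 + ∫ u in p1 / p2..1, g (p1 / u) := by
  have hp2 : 0 < p2 := hp1.trans_le hp12
  set a := p1 / p2
  have ha0 : 0 < a := by positivity
  have ha1 : a ≤ 1 := (div_le_one hp2).2 hp12
  have hX : Measurable fun u : ℝ => min (p1 / u) p2 := by fun_prop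
  have hlow : EqOn (fun u => g (min (p1 / u) p2)) (fun _ => g p2) (Ioc 0 a) := fun u hu => by
    have : p2 ≤ p1 / u := by rw [le_div_iff₀ hu.1, mul_comm, ← le_div_iff₀ hp2]; exact hu.2
    simp only [min_eq_right this]
  have hhigh : EqOn (fun u => g (min (p1 / u) p2)) (fun u => g (p1 / u)) (Icc a 1) := fun u hu => by
    have : p1 / u ≤ p2 := by
      rw [div_le_iff₀ (ha0.trans_le hu.1), mul_comm, ← div_le_iff₀ hp2]; exact hu.1
    simp only [min_eq_left this]
  have hcont : ContinuousOn (fun u => g (p1 / u)) (Icc a 1) :=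
    hg.comp_continuousOn <|
      continuousOn_const.div continuousOn_id fun u hu => (ha0.trans_le hu.1).ne'
  have hint_low : IntegrableOn (fun u => g (min (p1 / u) p2)) (Ioc 0 a) :=
    (integrableOn_const measure_Ioc_lt_top.ne).congr_fun hlow.symm measurableSet_Ioc
  have hint_high : IntegrableOn (fun u => g (min (p1 / u) p2)) (Ioc a 1) :=
    (hcont.integrableOn_Icc.mono_set Ioc_subset_Icc_self).congr_fun
      (hhigh.mono Ioc_subset_Icc_self).symm measurableSet_Ioc
  have hsplit : Ioc (0 : ℝ) 1 = Ioc 0 a ∪ Ioc a 1 := (Ioc_union_Ioc_eq_Ioc ha0.le ha1).symm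
  refine ⟨(integrable_map_measure hg.aestronglyMeasurable hX.aemeasurable).2 ?_, ?_⟩
  · change IntegrableOn (fun u => g (min (p1 / u) p2)) (Ioc 0 1)
    rw [hsplit]
    exact hint_low.union hint_high
  · rw [truncEqualRevenue, integral_map hX.aemeasurable hg.aestronglyMeasurable, hsplit,
      setIntegral_union (Ioc_disjoint_Ioc_of_le le_rfl) measurableSet_Ioc hint_low hint_high,
      setIntegral_congr_fun measurableSet_Ioc hlow,
      setIntegral_congr_fun measurableSet_Ioc (hhigh.mono Ioc_subset_Icc_self),
      setIntegral_const, ← intervalIntegral.integral_of_le ha1, Real.volume_real_Ioc,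
      sub_zero, max_eq_left ha0.le, smul_eq_mul]

lemma meanVarLe_truncEqualRevenue {μ σ : ℝ} (hp1 : 0 < p1) (hp12 : p1 ≤ p2)
    (heq1 : p1 * (1 + Real.log (p2 / p1)) = μ) (heq2 : p1 * (2 * p2 - p1) = μ ^ 2 + σ ^ 2) :
    MeanVarLe (truncEqualRevenue p1 p2) μ σ := by
  have hp2 : 0 < p2 := hp1.trans_le hp12
  have ha0 : 0 < p1 / p2 := by positivity
  have hprob := isProbabilityMeasure_truncEqualRevenue (p1 := p1) (p2 := p2)
  obtain ⟨h1, hmean⟩ := integrable_and_integral_truncEqualRevenue hp1 hp12 (g := fun x => x)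
    continuous_id
  obtain ⟨h2, hsq⟩ := integrable_and_integral_truncEqualRevenue hp1 hp12 (g := fun x => x ^ 2)
    (continuous_pow 2)
  have hmean' : ∫ x, x ∂truncEqualRevenue p1 p2 = μ := by
    have : ∫ u in p1 / p2..1, p1 / u = p1 * Real.log (p2 / p1) := by
      rw [show (fun u => p1 / u) = fun u => p1 * u⁻¹ from funext fun u => div_eq_mul_inv _ _,
        intervalIntegral.integral_const_mul, integral_inv_of_pos ha0 one_pos, one_div_div]
    rw [hmean, this, ← heq1]
    field_simp
  have hsq' : ∫ x, x ^ 2 ∂truncEqualRevenue p1 p2 = p1 * (2 * p2 - p1) := by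
    have hpos : ∀ u ∈ uIcc (p1 / p2) 1, u ≠ 0 := fun u hu =>
      (ha0.trans_le (uIcc_of_le ((div_le_one hp2).2 hp12) ▸ hu).1).ne'
    have hderiv : ∀ u ∈ uIcc (p1 / p2) 1, HasDerivAt (fun u => -p1 ^ 2 / u) ((p1 / u) ^ 2) u :=
      fun u hu => ((hasDerivAt_inv (hpos u hu)).const_mul (-p1 ^ 2)).congr_deriv (by field_simp)
    rw [hsq, intervalIntegral.integral_eq_sub_of_hasDerivAt hderiv
      ((continuousOn_const.div continuousOn_id hpos).pow 2).intervalIntegrable]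
    field_simp
    ring
  have hvar := integral_sub_sq h1 h2 0
  simp only [sub_zero, hmean'] at hvar
  exact ⟨hprob, truncEqualRevenue_Iio_zero hp1.le hp2.le, h1, h2, hmean', by linarith⟩

end WorstCase

theorem stmt6_general (μ σ : ℝ)
    (p1 p2 : ℝ) (hp1 : 0 < p1) (hp12 : p1 ≤ p2)
    (heq1 : p1 * (1 + Real.log (p2 / p1)) = μ)
    (heq2 : p1 * (2 * p2 - p1) = μ ^ 2 + σ ^ 2) :
    (⨆ A : {A : Measure ℝ // IsPriceMech A},
        ⨅ F : {F : Measure ℝ // MeanVarLe F μ σ}, mrev A.1 F.1) = p1 ∧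
    ∀ A : Measure ℝ, IsLogLottery A p1 p2 →
      ∀ F : Measure ℝ, MeanVarLe F μ σ → p1 ≤ mrev A F := by
  have hlog (A : Measure ℝ) (hA : IsLogLottery A p1 p2) (F : Measure ℝ) (hF : MeanVarLe F μ σ) :
      p1 ≤ mrev A F :=
    le_mrev_of_isLogLottery hp1 hp12 heq1 heq2 hA hF
  obtain ⟨A₀, hA₀⟩ := exists_isLogLottery hp1 hp12
  have hF₀ := meanVarLe_truncEqualRevenue hp1 hp12 heq1 heq2
  have : Nonempty {A : Measure ℝ // IsPriceMech A} := ⟨⟨A₀, hA₀.isPriceMech hp1⟩⟩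
  have : Nonempty {F : Measure ℝ // MeanVarLe F μ σ} := ⟨⟨_, hF₀⟩⟩
  have hworst (A : {A : Measure ℝ // IsPriceMech A}) :
      ⨅ F : {F : Measure ℝ // MeanVarLe F μ σ}, mrev A.1 F.1 ≤ p1 :=
    ciInf_le_of_le ⟨0, by rintro _ ⟨F, rfl⟩; exact mrev_nonneg A.2 F.1⟩ ⟨_, hF₀⟩
      (mrev_le_of_rev_le A.2 fun _ hp => rev_truncEqualRevenue_le hp1.le hp)
  refine ⟨le_antisymm (ciSup_le hworst) ?_, hlog⟩
  exact le_ciSup_of_le ⟨p1, by rintro _ ⟨A, rfl⟩; exact hworst A⟩ ⟨A₀, hA₀.isPriceMech hp1⟩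
    (le_ciInf fun F => hlog A₀ hA₀ F.1 F.2)

/-- For `μ > 0`, `σ ≥ 0`, and `(π₁,π₂)` with `0 < π₁ ≤ π₂` the (unique)
solution of `π₁(1 + ln(π₂/π₁)) = μ`, `π₁(2π₂ − π₁) = μ² + σ²`, the maximin robust revenue
over randomized price mechanisms equals `π₁`:
`sup_A inf_{F ∈ 𝔽_{μ,σ}} REV(A;F) = π₁`, attained by the log-lottery, i.e.
`REV(P^log_{μ,σ};F) ≥ π₁` for every `F ∈ 𝔽_{μ,σ}`. -/
theorem stmt6 (μ σ : ℝ) (hμ : 0 < μ) (hσ : 0 ≤ σ)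
    (p1 p2 : ℝ) (hp1 : 0 < p1) (hp12 : p1 ≤ p2)
    (heq1 : p1 * (1 + Real.log (p2 / p1)) = μ)
    (heq2 : p1 * (2 * p2 - p1) = μ ^ 2 + σ ^ 2) :
    (⨆ A : {A : Measure ℝ // IsPriceMech A},
        ⨅ F : {F : Measure ℝ // MeanVarLe F μ σ}, mrev A.1 F.1) = p1 ∧
    ∀ A : Measure ℝ, IsLogLottery A p1 p2 →
      ∀ F : Measure ℝ, MeanVarLe F μ σ → p1 ≤ mrev A F :=
  stmt6_general μ σ p1 p2 hp1 hp12 heq1 heq2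
end

section
/- For every ε > 0 there exists r₀ > 0 such that for all r ≥ r₀, the unique positive solution ρ(r) of (2e^{ρ−1}−1)/ρ² = r² + 1 satisfies ρ(r) ≤ 1 + (1+ε)·ln(1+r²). -/
/-!
Since `2e^{ρ-1} - 1 ≥ e^{ρ-1}`, the equation gives `ρ - 1 ≤ L + 2 log ρ` with `L = log (1 + r²)`.
Because `2 log ρ ≤ ρ/2 + 1`, this first forces `ρ ≤ 2L + 4`, and then the error term
`2 log ρ ≤ 2 log (2L + 4) = o(L)` is at most `εL` once `L`, i.e. `r`, is large.
-/

open Real Filter Asymptotics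

lemma le_two_mul_add_four_of_sub_one_le_add_two_mul_log {L t : ℝ} (ht : 0 < t)
    (h : t - 1 ≤ L + 2 * log t) : t ≤ 2 * L + 4 := by
  have hlog4 : log 4 < 3 / 2 := by
    rw [show (4 : ℝ) = 2 ^ 2 by norm_num, log_pow]
    linarith [log_two_lt_d9]
  have hquarter : log t - log 4 ≤ t / 4 - 1 := by
    rw [← log_div ht.ne' (by norm_num)]
    exact log_le_sub_one_of_pos (by positivity)
  linarith

lemma eventually_two_mul_log_two_mul_add_four_le {ε : ℝ} (hε : 0 < ε) :
    ∀ᶠ L in atTop, 2 * log (2 * L + 4) ≤ ε * L := by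
  have hlin : Tendsto (fun L : ℝ => 2 * L + 4) atTop atTop :=
    tendsto_atTop_add_const_right _ 4 (tendsto_id.const_mul_atTop two_pos)
  -- `ε / 6` because `2L + 4 ≤ 3L` once `L ≥ 4`
  have hsmall := (isLittleO_log_id_atTop.comp_tendsto hlin).bound (by positivity : 0 < ε / 6)
  filter_upwards [hsmall, eventually_ge_atTop 4] with L hL hL4
  simp only [Function.comp_apply, id, norm_eq_abs] at hL
  rw [abs_of_pos (by linarith : 0 < 2 * L + 4)] at hL
  nlinarith [le_abs_self (log (2 * L + 4))]

lemma sub_one_le_log_add_two_mul_log {ρ a : ℝ} (hρ : 1 ≤ ρ)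
    (h : (2 * exp (ρ - 1) - 1) / ρ ^ 2 = a) : ρ - 1 ≤ log a + 2 * log ρ := by
  have hρ2 : 0 < ρ ^ 2 := by positivity
  have hexp : 1 ≤ exp (ρ - 1) := one_le_exp (by linarith)
  have hle : exp (ρ - 1) ≤ a * ρ ^ 2 := by
    rw [div_eq_iff hρ2.ne'] at h
    linarith
  have ha : 0 < a := by rw [← h]; exact div_pos (by linarith) hρ2
  calc ρ - 1 ≤ log (a * ρ ^ 2) := by rw [← log_exp (ρ - 1)]; exact log_le_log (exp_pos _) hle
    _ = log a + 2 * log ρ := by rw [log_mul ha.ne' hρ2.ne', log_pow]; push_cast; ring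

lemma eventually_sub_one_le_one_add_mul {ε : ℝ} (hε : 0 < ε) :
    ∀ᶠ L in atTop, ∀ t, 0 < t → t - 1 ≤ L + 2 * log t → t - 1 ≤ (1 + ε) * L := by
  filter_upwards [eventually_two_mul_log_two_mul_add_four_le hε] with L hL t ht h
  have hlog : log t ≤ log (2 * L + 4) :=
    log_le_log ht (le_two_mul_add_four_of_sub_one_le_add_two_mul_log ht h)
  linarith

/-- For every `ε > 0` there is `r₀ > 0` such that for all `r ≥ r₀`,
the unique positive solution `ρ(r)` of `(2e^{ρ−1}−1)/ρ² = r² + 1` satisfies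
`ρ(r) ≤ 1 + (1+ε)·ln(1+r²)`. -/
theorem stmt8 (ε : ℝ) (hε : 0 < ε) :
    ∃ r₀ : ℝ, 0 < r₀ ∧ ∀ r : ℝ, r₀ ≤ r →
      ∀ ρ : ℝ, 1 ≤ ρ → (2 * Real.exp (ρ - 1) - 1) / ρ ^ 2 = r ^ 2 + 1 →
        ρ ≤ 1 + (1 + ε) * Real.log (1 + r ^ 2) := by
  have hL : Tendsto (fun r : ℝ => log (1 + r ^ 2)) atTop atTop :=
    tendsto_log_atTop.comp <|
      tendsto_atTop_add_const_left _ 1 (tendsto_pow_atTop two_ne_zero)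
  obtain ⟨r₁, hr₁⟩ := eventually_atTop.1 (hL.eventually (eventually_sub_one_le_one_add_mul hε))
  refine ⟨max r₁ 1, by positivity, fun r hr ρ hρ heq => ?_⟩
  have hbound := sub_one_le_log_add_two_mul_log hρ heq
  rw [add_comm (r ^ 2)] at hbound
  linarith [hr₁ r (le_of_max_le_left hr) ρ (by linarith) hbound]
end

section
/- Let F be a Borel probability distribution on [0,∞)^m whose j-th marginal F_j has mean μ_j > 0 and variance at most σ_j², for j = 1,…,m. Let r_j = σ_j/μ_j, r_max = max_j r_j, and let ρ be the function with ρ(r) the unique solution in [1,∞) of (2e^{ρ−1}−1)/ρ² = r² + 1. Then selling the items separately via log-lotteries guarantees a ρ(r_max)-approximation to the optimal revenue: Σ_{j=1}^m REV(P^log_{μ_j,σ_j};F_j) ≥ OPT_m(F)/ρ(r_max). (In particular, OPT_m(F) ≤ Σ_j μ_j.) -/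
/-!
A truthful mechanism never charges more than the buyer's total value, so `OPT_m(F) ≤ Σ_j μ_j`.
For a single item, the log-lottery on `[a, b] = [π₁, π₂]` has density `(b/p - 1)/Z` with
`Z = b log(b/a) - (b - a)`, so by Fubini its revenue against `X ∼ F_j` is `E[g(X)]/Z`, where
`g(x) = ∫_{[a,b] ∩ (-∞,x]} (b - p) dp`. The function `g` dominates the concave quadratic
`b(x - a) - (x² - a²)/2`, and the two equations defining `(a, b)` make the expectation of this
quadratic under mean `μ` and second moment `≤ μ² + σ²` at least `a Z`. Hence the revenue is at
least `a = μ / (1 + log(b/a))`. Finally `1 + log(b/a)` solves `(2e^{ρ-1} - 1)/ρ² = (σ/μ)² + 1`,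
and the left side increases on `[1, ∞)`, so `1 + log(b/a) ≤ ρ(r_max)`.
-/

open MeasureTheory

/-- A (direct revelation, possibly randomized) truthful selling mechanism for `m` items and
a single additive buyer: an allocation rule `alloc : [0,∞)^m → [0,1]^m` and a payment rule
`pay : [0,∞)^m → [0,∞)` satisfying incentive compatibility and individual rationality. -/
structure TruthfulMech (m : ℕ) where
  alloc : (Fin m → ℝ) → Fin m → ℝ
  pay : (Fin m → ℝ) → ℝ
  alloc_meas : Measurable alloc
  pay_meas : Measurable pay
  alloc_nonneg : ∀ v i, 0 ≤ alloc v i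
  alloc_le_one : ∀ v i, alloc v i ≤ 1
  pay_nonneg : ∀ v, 0 ≤ pay v
  ic : ∀ v w : Fin m → ℝ, (∀ i, 0 ≤ v i) → (∀ i, 0 ≤ w i) →
    (∑ i, alloc w i * v i) - pay w ≤ (∑ i, alloc v i * v i) - pay v
  ir : ∀ v : Fin m → ℝ, (∀ i, 0 ≤ v i) → 0 ≤ (∑ i, alloc v i * v i) - pay v

/-- Expected revenue of a truthful `m`-item mechanism on the joint distribution `F`. -/
noncomputable def mrevM {m : ℕ} (M : TruthfulMech m) (F : Measure (Fin m → ℝ)) : ℝ :=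
  ∫ v, M.pay v ∂F

/-- Optimal revenue `OPT_m(F)`: the supremum of expected revenue over all truthful
mechanisms for `m` items. -/
noncomputable def optM (m : ℕ) (F : Measure (Fin m → ℝ)) : ℝ :=
  ⨆ M : TruthfulMech m, mrevM M F

section Optimum

variable {m : ℕ} {F : Measure (Fin m → ℝ)}

lemma TruthfulMech.pay_le_sum (M : TruthfulMech m) {v : Fin m → ℝ} (hv : ∀ i, 0 ≤ v i) :
    M.pay v ≤ ∑ i, v i := by
  have hval : ∑ i, M.alloc v i * v i ≤ ∑ i, v i :=
    Finset.sum_le_sum fun i _ => mul_le_of_le_one_left (hv i) (M.alloc_le_one v i)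
  linarith [M.ir v hv]

lemma TruthfulMech.mrevM_le_sum_integral (M : TruthfulMech m) (hF : ∀ᵐ v ∂F, ∀ i, 0 ≤ v i)
    (hint : ∀ j, Integrable (fun v => v j) F) : mrevM M F ≤ ∑ j, ∫ v, v j ∂F := by
  have hsum : Integrable (fun v : Fin m → ℝ => ∑ j, v j) F :=
    integrable_finsetSum _ fun j _ => hint j
  have hpay_le : ∀ᵐ v ∂F, M.pay v ≤ ∑ j, v j := hF.mono fun v hv => M.pay_le_sum hv
  have hpay : Integrable M.pay F :=
    hsum.mono' M.pay_meas.aestronglyMeasurable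
      (hpay_le.mono fun v hv => by rwa [Real.norm_of_nonneg (M.pay_nonneg v)])
  rw [mrevM, ← integral_finsetSum _ fun j _ => hint j]
  exact integral_mono_ae hpay hsum hpay_le

lemma optM_le_sum_integral (hF : ∀ᵐ v ∂F, ∀ i, 0 ≤ v i)
    (hint : ∀ j, Integrable (fun v => v j) F) : optM m F ≤ ∑ j, ∫ v, v j ∂F :=
  Real.iSup_le (fun M => M.mrevM_le_sum_integral hF hint) <|
    Finset.sum_nonneg fun j _ => integral_nonneg_of_ae (hF.mono fun _ hv => hv j)

end Optimum

namespace MeanVarLe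

variable {G : Measure ℝ} {m s : ℝ}

lemma integrable_sub_sq (hG : MeanVarLe G m s) : Integrable (fun x => (x - m) ^ 2) G := by
  have := hG.prob
  have hexp : (fun x : ℝ => (x - m) ^ 2) = fun x => x ^ 2 - 2 * m * x + m ^ 2 := by
    ext x
    ring
  rw [hexp]
  exact (hG.int_sq.sub (hG.int_mean.const_mul _)).add (integrable_const _)

lemma integral_sq_le (hG : MeanVarLe G m s) : ∫ x, x ^ 2 ∂G ≤ m ^ 2 + s ^ 2 := by
  have := hG.prob
  have hexp : (fun x : ℝ => x ^ 2) = fun x => (x - m) ^ 2 + (2 * m * x - m ^ 2) := by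
    ext x
    ring
  have hlin : Integrable (fun x => 2 * m * x - m ^ 2) G :=
    (hG.int_mean.const_mul _).sub (integrable_const _)
  rw [hexp, integral_add hG.integrable_sub_sq hlin,
    integral_sub (hG.int_mean.const_mul _) (integrable_const _), integral_const_mul, hG.mean]
  simp only [integral_const, probReal_univ, one_smul]
  linarith [hG.var_le]

lemma ae_eq_mean (hG : MeanVarLe G m 0) : ∀ᵐ x ∂G, x = m := by
  have hvar : ∫ x, (x - m) ^ 2 ∂G = 0 :=
    le_antisymm (by simpa using hG.var_le) (integral_nonneg fun x => sq_nonneg _)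
  filter_upwards [(integral_eq_zero_iff_of_nonneg (fun x => sq_nonneg _)
    hG.integrable_sub_sq).mp hvar] with x hx
  simpa [sub_eq_zero] using hx

end MeanVarLe

section TailIntegral

variable {φ : ℝ → ℝ} {s : Set ℝ} (G : Measure ℝ) [IsFiniteMeasure G]

lemma integrable_uncurry_indicator_Iic (hφ : IntegrableOn φ s) :
    Integrable (Function.uncurry fun p x => (Set.Iic x).indicator φ p)
      ((volume.restrict s).prod G) := by
  have hset : MeasurableSet {q : ℝ × ℝ | q.1 ≤ q.2} := measurableSet_le measurable_fst measurable_snd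
  have hfun : (Function.uncurry fun p x => (Set.Iic x).indicator φ p) =
      {q : ℝ × ℝ | q.1 ≤ q.2}.indicator fun q => φ q.1 := by
    ext ⟨p, x⟩
    simp [Set.indicator_apply]
  rw [hfun]
  exact (hφ.comp_fst G).indicator hset

lemma integrable_setIntegral_inter_Iic (hφ : IntegrableOn φ s) :
    Integrable (fun x => ∫ p in s ∩ Set.Iic x, φ p) G := by
  simpa only [Function.uncurry_apply_pair, setIntegral_indicator measurableSet_Iic] using
    (integrable_uncurry_indicator_Iic G hφ).integral_prod_right

lemma setIntegral_mul_measure_Ici (hφ : IntegrableOn φ s) :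
    ∫ p in s, φ p * (G (Set.Ici p)).toReal = ∫ x, (∫ p in s ∩ Set.Iic x, φ p) ∂G := by
  have hind : ∀ p x, (Set.Iic x).indicator φ p = (Set.Ici p).indicator (fun _ => φ p) x := by
    intro p x
    simp [Set.indicator_apply]
  calc ∫ p in s, φ p * (G (Set.Ici p)).toReal
      = ∫ p in s, ∫ x, (Set.Iic x).indicator φ p ∂G := by
        simp_rw [hind, integral_indicator_const _ measurableSet_Ici, smul_eq_mul, mul_comm,
          measureReal_def]
    _ = ∫ x, (∫ p in s, (Set.Iic x).indicator φ p) ∂G :=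
        integral_integral_swap (integrable_uncurry_indicator_Iic G hφ)
    _ = ∫ x, (∫ p in s ∩ Set.Iic x, φ p) ∂G := by
        simp_rw [setIntegral_indicator measurableSet_Iic]

end TailIntegral

lemma setIntegral_Icc_sub (a b c : ℝ) (hac : a ≤ c) :
    ∫ p in Set.Icc a c, (b - p) = b * (c - a) - (c ^ 2 - a ^ 2) / 2 := by
  rw [integral_Icc_eq_integral_Ioc, ← intervalIntegral.integral_of_le hac,
    intervalIntegral.integral_sub intervalIntegrable_const intervalIntegral.intervalIntegrable_id]
  simp
  ring

lemma sub_sq_div_two_le_setIntegral {a b : ℝ} (hab : a ≤ b) (x : ℝ) :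
    b * (x - a) - (x ^ 2 - a ^ 2) / 2 ≤ ∫ p in Set.Icc a b ∩ Set.Iic x, (b - p) := by
  rcases lt_or_ge x a with hxa | hax
  · have hempty : Set.Icc a b ∩ Set.Iic x = ∅ :=
      Set.eq_empty_of_forall_notMem fun p hp => (hxa.trans_le hp.1.1).not_ge hp.2
    rw [hempty, Measure.restrict_empty, integral_zero_measure]
    nlinarith
  have hinter : Set.Icc a b ∩ Set.Iic x = Set.Icc a (min b x) := by
    ext p
    simp only [Set.mem_inter_iff, Set.mem_Icc, Set.mem_Iic, le_min_iff]
    tauto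
  rcases le_or_gt x b with hxb | hbx
  · rw [hinter, min_eq_right hxb, setIntegral_Icc_sub a b x hax]
  · rw [hinter, min_eq_left hbx.le, setIntegral_Icc_sub a b b hab]
    nlinarith

noncomputable def logLotteryNorm (a b : ℝ) : ℝ := b * Real.log (b / a) - (b - a)

noncomputable def logLotteryMeasure (a b : ℝ) : Measure ℝ :=
  (volume.restrict (Set.Icc a b)).withDensity fun p =>
    ENNReal.ofReal ((b / p - 1) / logLotteryNorm a b)

section LogLottery

variable {a b : ℝ}

lemma logLotteryNorm_pos (ha : 0 < a) (hab : a < b) : 0 < logLotteryNorm a b := by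
  have hb : 0 < b := ha.trans hab
  have h := Real.log_lt_sub_one_of_pos (div_pos ha hb) ((div_lt_one hb).mpr hab).ne
  rw [← inv_div, Real.log_inv, inv_div] at h
  have : b * (a / b) = a := by field_simp
  unfold logLotteryNorm
  nlinarith

lemma intervalIntegral_div_sub_one_div {x : ℝ} (Z : ℝ) (ha : 0 < a) (hx : a ≤ x) :
    ∫ p in a..x, (b / p - 1) / Z = (b * Real.log (x / a) - (x - a)) / Z := by
  have hinv : IntervalIntegrable (fun p : ℝ => p⁻¹) volume a x :=
    intervalIntegral.intervalIntegrable_inv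
      (fun t ht => (ha.trans_le (Set.uIcc_of_le hx ▸ ht).1).ne') (by fun_prop)
  simp only [div_eq_mul_inv b]
  rw [intervalIntegral.integral_div,
    intervalIntegral.integral_sub (hinv.const_mul b) intervalIntegrable_const,
    intervalIntegral.integral_const_mul, integral_inv_of_pos ha (ha.trans_le hx)]
  simp

lemma logLotteryMeasure_Iic {x : ℝ} (ha : 0 < a) (hab : a < b) (hax : a ≤ x) (hxb : x ≤ b) :
    logLotteryMeasure a b (Set.Iic x) =
      ENNReal.ofReal ((b * Real.log (x / a) - (x - a)) / logLotteryNorm a b) := by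
  have hZ := logLotteryNorm_pos ha hab
  have hIcc : Set.Iic x ∩ Set.Icc a b = Set.Icc a x := by
    ext p
    simp only [Set.mem_inter_iff, Set.mem_Iic, Set.mem_Icc]
    constructor
    · rintro ⟨hpx, hap, -⟩
      exact ⟨hap, hpx⟩
    · rintro ⟨hap, hpx⟩
      exact ⟨hpx, hap, hpx.trans hxb⟩
  have hdens_cont : ContinuousOn (fun p => (b / p - 1) / logLotteryNorm a b) (Set.Icc a x) :=
    ContinuousOn.div_const (ContinuousOn.sub (continuousOn_const.div continuousOn_id
      fun p hp => (ha.trans_le hp.1).ne') continuousOn_const) _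
  have hdens_nonneg : ∀ p ∈ Set.Icc a x, 0 ≤ (b / p - 1) / logLotteryNorm a b := by
    intro p hp
    have hp0 : 0 < p := ha.trans_le hp.1
    have : 1 ≤ b / p := (one_le_div hp0).mpr (hp.2.trans hxb)
    exact div_nonneg (by linarith) hZ.le
  rw [logLotteryMeasure, withDensity_apply _ measurableSet_Iic,
    Measure.restrict_restrict measurableSet_Iic, hIcc,
    ← ofReal_integral_eq_lintegral_ofReal (hdens_cont.integrableOn_compact isCompact_Icc)
      ((ae_restrict_iff' measurableSet_Icc).mpr (Filter.Eventually.of_forall hdens_nonneg)),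
    integral_Icc_eq_integral_Ioc, ← intervalIntegral.integral_of_le hax,
    intervalIntegral_div_sub_one_div _ ha hax]

lemma IsLogLottery.eq_logLotteryMeasure {A : Measure ℝ} (hA : IsLogLottery A a b) (ha : 0 < a)
    (hab : a < b) : A = logLotteryMeasure a b := by
  have := hA.prob
  have hIic_a : logLotteryMeasure a b (Set.Iic a) = 0 := by
    simp [logLotteryMeasure_Iic ha hab le_rfl hab.le, div_self ha.ne']
  have hIic_b : logLotteryMeasure a b (Set.Iic b) = 1 := by
    rw [logLotteryMeasure_Iic ha hab hab.le le_rfl, ← logLotteryNorm,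
      div_self (logLotteryNorm_pos ha hab).ne', ENNReal.ofReal_one]
  refine Measure.ext_of_Iic A _ fun x => ?_
  rcases lt_or_ge x a with hxa | hax
  · have hA_a : A (Set.Iic a) = 0 := by
      simp [hA.cdf a ⟨le_rfl, hab⟩, div_self ha.ne']
    rw [measure_mono_null (Set.Iic_subset_Iic.mpr hxa.le) hA_a,
      measure_mono_null (Set.Iic_subset_Iic.mpr hxa.le) hIic_a]
  rcases lt_or_ge x b with hxb | hbx
  · rw [hA.cdf x ⟨hax, hxb⟩, logLotteryMeasure_Iic ha hab hax hxb.le, logLotteryNorm]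
  · have hIcc : ∀ y, b ≤ y → Set.Iic y ∩ Set.Icc a b = Set.Icc a b := fun y hy =>
      Set.inter_eq_right.mpr fun p hp => hp.2.trans hy
    rw [le_antisymm prob_le_one (hA.supp ▸ measure_mono fun p hp => hp.2.trans hbx), ← hIic_b,
      logLotteryMeasure, withDensity_apply _ measurableSet_Iic, withDensity_apply _ measurableSet_Iic,
      Measure.restrict_restrict measurableSet_Iic, Measure.restrict_restrict measurableSet_Iic,
      hIcc x hbx, hIcc b le_rfl]

lemma mrev_logLotteryMeasure (ha : 0 < a) (hab : a < b) (G : Measure ℝ) :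
    mrev (logLotteryMeasure a b) G =
      (∫ p in Set.Icc a b, (b - p) * (G (Set.Ici p)).toReal) / logLotteryNorm a b := by
  have hZ := logLotteryNorm_pos ha hab
  rw [mrev, logLotteryMeasure, integral_withDensity_eq_integral_toReal_smul (by fun_prop)
    (.of_forall fun _ => ENNReal.ofReal_lt_top), ← integral_div]
  refine setIntegral_congr_fun measurableSet_Icc fun p hp => ?_
  have hp0 : 0 < p := ha.trans_le hp.1
  have hdens : 0 ≤ (b / p - 1) / logLotteryNorm a b :=
    div_nonneg (sub_nonneg.mpr ((one_le_div hp0).mpr hp.2)) hZ.le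
  rw [ENNReal.toReal_ofReal hdens, smul_eq_mul, rev]
  field_simp

section SingleItem

variable {G : Measure ℝ} {a b m s : ℝ}

lemma le_mrev_logLotteryMeasure (hG : MeanVarLe G m s) (ha : 0 < a) (hab : a < b)
    (hm : a * (1 + Real.log (b / a)) = m) (hs : a * (2 * b - a) = m ^ 2 + s ^ 2) :
    a ≤ mrev (logLotteryMeasure a b) G := by
  have := hG.prob
  have hφ : IntegrableOn (fun p => b - p) (Set.Icc a b) :=
    (continuous_const.sub continuous_id).integrableOn_Icc
  have hlin : Integrable (fun x => b * (x - a)) G :=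
    (hG.int_mean.sub (integrable_const a)).const_mul b
  have hsq : Integrable (fun x => (x ^ 2 - a ^ 2) / 2) G :=
    (hG.int_sq.sub (integrable_const _)).div_const 2
  have hq_integral : ∫ x, (b * (x - a) - (x ^ 2 - a ^ 2) / 2) ∂G
      = b * (m - a) - (∫ x, x ^ 2 ∂G - a ^ 2) / 2 := by
    rw [integral_sub hlin hsq, integral_const_mul, integral_div,
      integral_sub hG.int_mean (integrable_const a), integral_sub hG.int_sq (integrable_const _),
      hG.mean]
    simp
  have hnorm : a * logLotteryNorm a b = b * (m - a) - (m ^ 2 + s ^ 2 - a ^ 2) / 2 := by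
    rw [← hs, ← hm, logLotteryNorm]
    ring
  rw [mrev_logLotteryMeasure ha hab, setIntegral_mul_measure_Ici G hφ,
    le_div_iff₀ (logLotteryNorm_pos ha hab)]
  calc a * logLotteryNorm a b ≤ ∫ x, (b * (x - a) - (x ^ 2 - a ^ 2) / 2) ∂G := by
        rw [hq_integral, hnorm]
        linarith [hG.integral_sq_le]
    _ ≤ _ := integral_mono (hlin.sub hsq) (integrable_setIntegral_inter_Iic G hφ)
        (sub_sq_div_two_le_setIntegral hab.le)

lemma IsLogLottery.ae_eq_of_eq {A : Measure ℝ} (hA : IsLogLottery A a a) : ∀ᵐ p ∂A, p = a := by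
  have := hA.prob
  have hsupp : A {a} = 1 := by simpa using hA.supp
  exact ae_iff.mpr ((prob_compl_eq_zero_iff (measurableSet_singleton a)).mpr hsupp)

lemma IsLogLottery.le_mrev {A : Measure ℝ} (hA : IsLogLottery A a b) (hG : MeanVarLe G m s)
    (ha : 0 < a) (hab : a ≤ b) (hm : a * (1 + Real.log (b / a)) = m)
    (hs : a * (2 * b - a) = m ^ 2 + s ^ 2) : a ≤ mrev A G := by
  rcases hab.lt_or_eq with hab | rfl
  · rw [hA.eq_logLotteryMeasure ha hab]
    exact le_mrev_logLotteryMeasure hG ha hab hm hs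
  have := hA.prob
  have := hG.prob
  have hma : m = a := by simpa [div_self ha.ne'] using hm.symm
  have hs0 : s = 0 := by
    subst hma
    nlinarith [sq_nonneg s]
  subst hma hs0
  have hGa : G (Set.Ici m) = 1 :=
    (prob_compl_eq_zero_iff measurableSet_Ici).mp
      (ae_iff.mp (hG.ae_eq_mean.mono fun x hx => (hx.ge : x ∈ Set.Ici m)))
  rw [mrev, integral_congr_ae (hA.ae_eq_of_eq.mono fun p hp => congrArg (rev G) hp),
    integral_const, rev, hGa]
  simp

end SingleItem

noncomputable def rhoLhs (x : ℝ) : ℝ := (2 * Real.exp (x - 1) - 1) / x ^ 2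

lemma exp_mul_sub_one_add_one_pos {u : ℝ} (hu : 0 < u) : 0 < Real.exp u * (u - 1) + 1 := by
  have h := Real.add_one_lt_exp (neg_ne_zero.mpr hu.ne')
  have hinv : Real.exp u * Real.exp (-u) = 1 := by rw [← Real.exp_add, add_neg_cancel, Real.exp_zero]
  nlinarith [Real.exp_pos u]

lemma strictMonoOn_rhoLhs : StrictMonoOn rhoLhs (Set.Ici 1) := by
  have hderiv : ∀ x : ℝ, x ≠ 0 → HasDerivAt rhoLhs
      ((2 * Real.exp (x - 1) * x ^ 2 - (2 * Real.exp (x - 1) - 1) * (2 * x)) / (x ^ 2) ^ 2) x := by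
    intro x hx
    have hnum : HasDerivAt (fun x => 2 * Real.exp (x - 1) - 1) (2 * Real.exp (x - 1)) x := by
      simpa using (((hasDerivAt_id x).sub_const 1).exp.const_mul 2).sub_const 1
    have hden : HasDerivAt (fun x : ℝ => x ^ 2) (2 * x) x := by simpa using hasDerivAt_pow 2 x
    exact hnum.div hden (pow_ne_zero 2 hx)
  refine strictMonoOn_of_deriv_pos (convex_Ici 1) ?_ fun x hx => ?_
  · exact fun x hx => (hderiv x (zero_lt_one.trans_le hx).ne').continuousAt.continuousWithinAt
  rw [interior_Ici, Set.mem_Ioi] at hx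
  rw [(hderiv x (zero_lt_one.trans hx).ne').deriv]
  have hpos := exp_mul_sub_one_add_one_pos (sub_pos.mpr hx)
  have hx0 : 0 < x := zero_lt_one.trans hx
  have hnum : 0 < 2 * Real.exp (x - 1) * x ^ 2 - (2 * Real.exp (x - 1) - 1) * (2 * x) := by
    have : 2 * Real.exp (x - 1) * x ^ 2 - (2 * Real.exp (x - 1) - 1) * (2 * x)
        = 2 * x * (Real.exp (x - 1) * (x - 1 - 1) + 1) := by ring
    rw [this]
    positivity
  positivity

lemma rhoLhs_one_add_log {a b m s : ℝ} (ha : 0 < a) (hab : a ≤ b)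
    (hm : a * (1 + Real.log (b / a)) = m) (hs : a * (2 * b - a) = m ^ 2 + s ^ 2) (hm0 : 0 < m) :
    rhoLhs (1 + Real.log (b / a)) = (s / m) ^ 2 + 1 := by
  have hL : 0 < 1 + Real.log (b / a) := by
    have : 0 < a * (1 + Real.log (b / a)) := hm ▸ hm0
    exact pos_of_mul_pos_right this ha.le
  rw [rhoLhs, add_sub_cancel_left, Real.exp_log (div_pos (ha.trans_le hab) ha)]
  rw [div_pow, div_add_one (pow_ne_zero 2 hm0.ne'), add_comm (s ^ 2), ← hs, ← hm]
  field_simp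

lemma IsLogLottery.mean_le_mrev_mul {A G : Measure ℝ} {a b m s r ρ : ℝ}
    (hA : IsLogLottery A a b) (hG : MeanVarLe G m s) (ha : 0 < a) (hab : a ≤ b)
    (hm : a * (1 + Real.log (b / a)) = m) (hs : a * (2 * b - a) = m ^ 2 + s ^ 2)
    (hm0 : 0 < m) (hs0 : 0 ≤ s) (hsr : s / m ≤ r) (hρ1 : 1 ≤ ρ) (hρ : rhoLhs ρ = r ^ 2 + 1) :
    m ≤ mrev A G * ρ := by
  have hL : 1 ≤ 1 + Real.log (b / a) :=
    le_add_of_nonneg_right (Real.log_nonneg ((one_le_div ha).mpr hab))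
  have hLρ : 1 + Real.log (b / a) ≤ ρ := by
    refine (strictMonoOn_rhoLhs.le_iff_le hL hρ1).mp ?_
    rw [rhoLhs_one_add_log ha hab hm hs hm0, hρ]
    gcongr
  have hrev := hA.le_mrev hG ha hab hm hs
  calc m = a * (1 + Real.log (b / a)) := hm.symm
    _ ≤ mrev A G * ρ := mul_le_mul hrev hLρ (by linarith) (ha.le.trans hrev)

theorem stmt14_general (m : ℕ) (μs σs : Fin m → ℝ)
    (hμs : ∀ j, 0 < μs j) (hσs : ∀ j, 0 ≤ σs j)
    (F : Measure (Fin m → ℝ))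
    (hFsupp : F {v | ¬ ∀ i, 0 ≤ v i} = 0)
    (hmarg : ∀ j, MeanVarLe (F.map (fun v => v j)) (μs j) (σs j))
    (rmax : ℝ) (hrmax : IsGreatest (Set.range fun j => σs j / μs j) rmax)
    (ρ : ℝ) (hρ1 : 1 ≤ ρ) (hρ2 : (2 * Real.exp (ρ - 1) - 1) / ρ ^ 2 = rmax ^ 2 + 1)
    (A : Fin m → Measure ℝ)
    (hA : ∀ j, ∃ p1 p2 : ℝ, 0 < p1 ∧ p1 ≤ p2 ∧
      p1 * (1 + Real.log (p2 / p1)) = μs j ∧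
      p1 * (2 * p2 - p1) = (μs j) ^ 2 + (σs j) ^ 2 ∧
      IsLogLottery (A j) p1 p2) :
    optM m F / ρ ≤ (∑ j, mrev (A j) (F.map (fun v => v j))) ∧
    optM m F ≤ ∑ j, μs j := by
  have hproj : ∀ j, AEMeasurable (fun v : Fin m → ℝ => v j) F :=
    fun j => (measurable_pi_apply j).aemeasurable
  have hint : ∀ j, Integrable (fun v : Fin m → ℝ => v j) F := fun j =>
    (integrable_map_measure aestronglyMeasurable_id (hproj j)).mp (hmarg j).int_mean
  have hmean : ∀ j, ∫ v, v j ∂F = μs j := fun j => by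
    rw [← (hmarg j).mean, integral_map (f := fun x => x) (hproj j) aestronglyMeasurable_id]
  have hopt : optM m F ≤ ∑ j, μs j := by
    simpa only [hmean] using optM_le_sum_integral (ae_iff.mpr hFsupp) hint
  refine ⟨?_, hopt⟩
  rw [div_le_iff₀ (zero_lt_one.trans_le hρ1), Finset.sum_mul]
  refine hopt.trans (Finset.sum_le_sum fun j _ => ?_)
  obtain ⟨p1, p2, hp1, hp12, hm, hs, hlog⟩ := hA j
  exact hlog.mean_le_mrev_mul (hmarg j) hp1 hp12 hm hs (hμs j) (hσs j) (hrmax.2 ⟨j, rfl⟩) hρ1 hρ2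

/-- Let `F` be a Borel probability distribution on `[0,∞)^m` whose `j`-th
marginal has mean `μ_j > 0` and variance at most `σ_j²`; let `r_max = max_j σ_j/μ_j` and
`ρ = ρ(r_max)` the unique solution in `[1,∞)` of `(2e^{ρ−1}−1)/ρ² = r_max² + 1`. Then
selling the items separately via log-lotteries guarantees a `ρ(r_max)`-approximation:
`Σ_j REV(P^log_{μ_j,σ_j};F_j) ≥ OPT_m(F)/ρ(r_max)`; in particular `OPT_m(F) ≤ Σ_j μ_j`. -/
theorem stmt14 (m : ℕ) (hm : 0 < m) (μs σs : Fin m → ℝ)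
    (hμs : ∀ j, 0 < μs j) (hσs : ∀ j, 0 ≤ σs j)
    (F : Measure (Fin m → ℝ)) (hFprob : IsProbabilityMeasure F)
    (hFsupp : F {v | ¬ ∀ i, 0 ≤ v i} = 0)
    (hmarg : ∀ j, MeanVarLe (F.map (fun v => v j)) (μs j) (σs j))
    (rmax : ℝ) (hrmax : IsGreatest (Set.range fun j => σs j / μs j) rmax)
    (ρ : ℝ) (hρ1 : 1 ≤ ρ) (hρ2 : (2 * Real.exp (ρ - 1) - 1) / ρ ^ 2 = rmax ^ 2 + 1)
    (A : Fin m → Measure ℝ)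
    (hA : ∀ j, ∃ p1 p2 : ℝ, 0 < p1 ∧ p1 ≤ p2 ∧
      p1 * (1 + Real.log (p2 / p1)) = μs j ∧
      p1 * (2 * p2 - p1) = (μs j) ^ 2 + (σs j) ^ 2 ∧
      IsLogLottery (A j) p1 p2) :
    optM m F / ρ ≤ (∑ j, mrev (A j) (F.map (fun v => v j))) ∧
    optM m F ≤ ∑ j, μs j :=
  stmt14_general m μs σs hμs hσs F hFsupp hmarg rmax hrmax ρ hρ1 hρ2 A hA
end LogLottery
end
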